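/- arXiv:1410.5106 — 6 statements merged into one kernel-verified Lean document; each statement's English description precedes it below -/
import Mathlib

section
/- Let q be a prime and α₁, α₂ positive integers. Suppose B₁, B₂, C₁, C₂ are integers with q^{α₁}·C₂ + B₁·B₂ + q^{α₂}·C₁ ≡ 0 (mod q^{α₁+α₂}), gcd(B₁, C₁, q) = 1 and gcd(B₂, C₂, q) = 1, and B₁, B₂ nonzero. Then v_q(B₁) ≤ α₂ and v_q(B₂) ≤ α₁, where v_q denotes the q-adic valuation. -/
/-!
If `q ^ (α₂ + 1) ∣ B₁`, then either `α₁ ≤ α₂`, and `0 < B₁ ≤ q ^ α₁` already bounds the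
valuation of `B₁` by `α₁`, or `α₂ < α₁`, and the congruence reduces modulo `q ^ (α₂ + 1)` to
`q ^ (α₂ + 1) ∣ q ^ α₂ * C₁`, so `q` divides both `B₁` and `C₁`, against `gcd(B₁, C₁, q) = 1`.
-/

lemma padicValInt_le_of_le_pow {q : ℕ} (hq : 1 < q) {B : ℤ} (hB : 0 < B) {a : ℕ}
    (hBa : B ≤ (q : ℤ) ^ a) : padicValInt q B ≤ a := by
  have hq' : (1 : ℤ) < q := by exact_mod_cast hq
  have hpow : (q : ℤ) ^ padicValInt q B ≤ B := Int.le_of_dvd hB (padicValInt_dvd B)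
  exact (pow_le_pow_iff_right₀ hq').mp (hpow.trans hBa)

lemma Int.not_dvd_of_gcd_gcd_eq_one {q : ℕ} (hq : q ≠ 1) {B C : ℤ}
    (h : Int.gcd B (Int.gcd C q : ℤ) = 1) (hC : (q : ℤ) ∣ C) : ¬ (q : ℤ) ∣ B := by
  intro hB
  have hdvd : q ∣ Int.gcd B (Int.gcd C q : ℤ) :=
    Int.dvd_gcd hB (Int.natCast_dvd_natCast.mpr (Int.dvd_gcd hC dvd_rfl))
  rw [h, Nat.dvd_one] at hdvd
  exact hq hdvd

lemma dvd_of_pow_succ_dvd_of_plucker {q B₁ B₂ C₁ C₂ : ℤ} (hq : q ≠ 0) {α₁ α₂ : ℕ}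
    (hα : α₂ < α₁) (hB₁ : q ^ (α₂ + 1) ∣ B₁)
    (hcong : q ^ (α₁ + α₂) ∣ q ^ α₁ * C₂ + B₁ * B₂ + q ^ α₂ * C₁) : q ∣ C₁ := by
  have hsum : q ^ (α₂ + 1) ∣ q ^ α₁ * C₂ + B₁ * B₂ + q ^ α₂ * C₁ :=
    (pow_dvd_pow q (by omega)).trans hcong
  have hC₂ : q ^ (α₂ + 1) ∣ q ^ α₁ * C₂ := (pow_dvd_pow q hα).mul_right C₂
  have hC₁ : q ^ (α₂ + 1) ∣ q ^ α₂ * C₁ := by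
    rw [show q ^ α₂ * C₁ = q ^ α₁ * C₂ + B₁ * B₂ + q ^ α₂ * C₁ - q ^ α₁ * C₂ - B₁ * B₂ by ring]
    exact (hsum.sub hC₂).sub (hB₁.mul_right B₂)
  rw [pow_succ] at hC₁
  exact (mul_dvd_mul_iff_left (pow_ne_zero α₂ hq)).mp hC₁

lemma padicValInt_le_of_plucker {q : ℕ} (hq : 1 < q) {α₁ α₂ : ℕ} {B₁ B₂ C₁ C₂ : ℤ}
    (hB₁ : 0 < B₁) (hB₁ub : B₁ ≤ (q : ℤ) ^ α₁)
    (hcong : ((q : ℤ) ^ (α₁ + α₂)) ∣ ((q : ℤ) ^ α₁ * C₂ + B₁ * B₂ + (q : ℤ) ^ α₂ * C₁))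
    (hgcd : Int.gcd B₁ ((Int.gcd C₁ (q : ℤ) : ℕ) : ℤ) = 1) :
    padicValInt q B₁ ≤ α₂ := by
  rcases le_or_gt α₁ α₂ with hle | hlt
  · exact (padicValInt_le_of_le_pow hq hB₁ hB₁ub).trans hle
  by_contra! hval
  have hpow : (q : ℤ) ^ (α₂ + 1) ∣ B₁ :=
    (padicValInt_dvd_iff_of_ne_one hq.ne' _ _).mpr (Or.inr hval)
  have hqC₁ : (q : ℤ) ∣ C₁ := dvd_of_pow_succ_dvd_of_plucker (by positivity) hlt hpow hcong
  exact Int.not_dvd_of_gcd_gcd_eq_one hq.ne' hgcd hqC₁ ((dvd_pow_self _ (by omega)).trans hpow)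

theorem stmt_0_general (q : ℕ) (hq : q.Prime) (α₁ α₂ : ℕ)
    (B₁ B₂ C₁ C₂ : ℤ)
    (hB₁lb : 1 ≤ B₁) (hB₁ub : B₁ ≤ (q : ℤ) ^ α₁)
    (hB₂lb : 1 ≤ B₂) (hB₂ub : B₂ ≤ (q : ℤ) ^ α₂)
    (hcong : ((q : ℤ) ^ (α₁ + α₂)) ∣ ((q : ℤ) ^ α₁ * C₂ + B₁ * B₂ + (q : ℤ) ^ α₂ * C₁))
    (hgcd₁ : Int.gcd B₁ ((Int.gcd C₁ (q : ℤ) : ℕ) : ℤ) = 1)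
    (hgcd₂ : Int.gcd B₂ ((Int.gcd C₂ (q : ℤ) : ℕ) : ℤ) = 1) :
    padicValInt q B₁ ≤ α₂ ∧ padicValInt q B₂ ≤ α₁ := by
  have hcong' : ((q : ℤ) ^ (α₂ + α₁)) ∣ ((q : ℤ) ^ α₂ * C₁ + B₂ * B₁ + (q : ℤ) ^ α₁ * C₂) := by
    rw [add_comm α₂ α₁]
    convert hcong using 1
    ring
  exact ⟨padicValInt_le_of_plucker hq.one_lt hB₁lb hB₁ub hcong hgcd₁,
    padicValInt_le_of_plucker hq.one_lt hB₂lb hB₂ub hcong' hgcd₂⟩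

/-- Plücker-type congruence constrains the q-adic valuations of B₁, B₂.
(Following the paper's convention that the residues Bⱼ are represented by
1 ≤ Bⱼ ≤ q^{αⱼ}; in particular B₁, B₂ are nonzero.) -/
theorem stmt_0 (q : ℕ) (hq : q.Prime) (α₁ α₂ : ℕ) (hα₁ : 1 ≤ α₁) (hα₂ : 1 ≤ α₂)
    (B₁ B₂ C₁ C₂ : ℤ)
    (hB₁lb : 1 ≤ B₁) (hB₁ub : B₁ ≤ (q : ℤ) ^ α₁)
    (hB₂lb : 1 ≤ B₂) (hB₂ub : B₂ ≤ (q : ℤ) ^ α₂)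
    (hB₁0 : B₁ ≠ 0) (hB₂0 : B₂ ≠ 0)
    (hcong : ((q : ℤ) ^ (α₁ + α₂)) ∣ ((q : ℤ) ^ α₁ * C₂ + B₁ * B₂ + (q : ℤ) ^ α₂ * C₁))
    (hgcd₁ : Int.gcd B₁ ((Int.gcd C₁ (q : ℤ) : ℕ) : ℤ) = 1)
    (hgcd₂ : Int.gcd B₂ ((Int.gcd C₂ (q : ℤ) : ℕ) : ℤ) = 1) :
    padicValInt q B₁ ≤ α₂ ∧ padicValInt q B₂ ≤ α₁ :=
  stmt_0_general q hq α₁ α₂ B₁ B₂ C₁ C₂ hB₁lb hB₁ub hB₂lb hB₂ub hcong hgcd₁ hgcd₂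
end

section
/- Let N be a prime and m₁, m₂, n₁, n₂ integers. The GL(3) long-element Kloosterman sum of level N with both moduli equal to N satisfies S^{(N)}(m₁, m₂, n₁, n₂; N, N) = N − 1 + r_N(n₁)·r_N(m₂), where r_N is the Ramanujan sum modulo N. In particular it equals N(N−1) if N divides both n₁ and m₂, equals N if N divides neither n₁ nor m₂, and equals 0 otherwise. -/
/-- e(t) = exp(2πit) -/
noncomputable def e2pi (t : ℝ) : ℂ := Complex.exp (2 * Real.pi * Complex.I * t)

/-- Ramanujan sum r_N(n) = Σ_{a mod N, gcd(a,N)=1} e(an/N). -/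
noncomputable def ramanujanSum (N : ℕ) (n : ℤ) : ℂ :=
  ∑ a ∈ Finset.range N, if Nat.gcd a N = 1 then e2pi ((((a : ℤ) * n : ℤ) : ℝ) / (N : ℝ)) else 0

/-!
Since `N ∣ B₁` forces `B₁ = 0`, the coprimality condition forces `C₁` to be a unit, the
congruence forces `C₂ ≡ -C₁`, and the phase collapses to `e(B₂ (m₂ - n₁ C₁⁻¹) / N)`. So
`S = Σ_{c ∈ (ℤ/N)ˣ} Σ_{b mod N} e(b (m₂ - n₁ c⁻¹) / N)`. The terms `b = 0` contribute `N - 1`;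
for a unit `b` the substitution `a = -b c⁻¹` permutes the units, and what is left is
`Σ_{a, b units} e((a n₁ + b m₂) / N) = r_N(n₁) r_N(m₂)`. The special values follow from
`r_N(n) = N [N ∣ n] - 1`.
-/

open Finset ZMod

lemma e2pi_intCast_div (N : ℕ) [NeZero N] (k : ℤ) :
    e2pi ((k : ℝ) / N) = stdAddChar (k : ZMod N) := by
  rw [stdAddChar_coe, e2pi]
  congr 1
  push_cast
  ring

lemma sum_range_eq_sum_zmod {M : Type*} [AddCommMonoid M] (N : ℕ) [NeZero N] (f : ZMod N → M) :
    ∑ a ∈ range N, f a = ∑ x, f x :=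
  sum_nbij' (fun a ↦ (a : ZMod N)) ZMod.val (by simp) (by simp [ZMod.val_lt])
    (fun a ha ↦ val_cast_of_lt (mem_range.1 ha)) (fun x _ ↦ natCast_zmod_val x) (fun _ _ ↦ rfl)

lemma sum_range_coprime_eq_sum_units {M : Type*} [AddCommMonoid M] (N : ℕ) [NeZero N]
    (f : ZMod N → M) :
    ∑ a ∈ range N, (if a.gcd N = 1 then f a else 0) = ∑ u : (ZMod N)ˣ, f u := by
  simp_rw [← Nat.coprime_iff_gcd_eq_one, ← isUnit_iff_coprime]
  rw [sum_range_eq_sum_zmod N (fun x ↦ if IsUnit x then f x else 0), ← sum_filter]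
  symm
  exact sum_nbij' (fun u ↦ (u : ZMod N)) (fun x ↦ if h : IsUnit x then h.unit else 1)
    (by simp) (by simp) (by simp) (fun x hx ↦ by simp [(mem_filter.1 hx).2]) (fun _ _ ↦ rfl)

lemma sum_units_eq_sum_sub {K M : Type*} [Field K] [Fintype K] [DecidableEq K] [AddCommGroup M]
    (f : K → M) :
    ∑ u : Kˣ, f u = ∑ x, f x - f 0 := by
  rw [eq_sub_iff_add_eq, ← add_sum_erase univ f (mem_univ 0), add_comm]
  congr 1
  exact sum_nbij' (fun u ↦ (u : K)) (fun x ↦ if h : x = 0 then 1 else Units.mk0 x h)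
    (by simp) (by simp) (by simp) (fun x hx ↦ by simp [ne_of_mem_erase hx]) (fun _ _ ↦ rfl)

section Prime

variable {N : ℕ} [Fact N.Prime]

lemma sum_stdAddChar_mul (b : ZMod N) :
    ∑ x : ZMod N, stdAddChar (x * b) = if b = 0 then (N : ℂ) else 0 := by
  rw [AddChar.sum_mulShift b (isPrimitive_stdAddChar N), ZMod.card, Nat.cast_ite, Nat.cast_zero]

lemma ramanujanSum_eq_sum_units (n : ℤ) :
    ramanujanSum N n = ∑ u : (ZMod N)ˣ, stdAddChar ((u : ZMod N) * (n : ZMod N)) := by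
  rw [ramanujanSum, ← sum_range_coprime_eq_sum_units N (fun x ↦ stdAddChar (x * (n : ZMod N)))]
  refine sum_congr rfl fun a _ ↦ ?_
  rw [e2pi_intCast_div]
  push_cast
  rfl

lemma ramanujanSum_eq (n : ℤ) :
    ramanujanSum N n = if (N : ℤ) ∣ n then (N : ℂ) - 1 else -1 := by
  rw [ramanujanSum_eq_sum_units, sum_units_eq_sum_sub (fun x ↦ stdAddChar (x * (n : ZMod N))),
    sum_stdAddChar_mul]
  simp only [intCast_zmod_eq_zero_iff_dvd, zero_mul, AddChar.map_zero_eq_one]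
  split_ifs <;> ring

lemma sum_units_sum_stdAddChar_mul_sub_inv (a b : ZMod N) :
    ∑ c : (ZMod N)ˣ, ∑ x : ZMod N, stdAddChar (x * (a - b * (c : ZMod N)⁻¹)) =
      (N : ℂ) - 1 + (∑ u : (ZMod N)ˣ, stdAddChar ((u : ZMod N) * b)) *
        ∑ v : (ZMod N)ˣ, stdAddChar ((v : ZMod N) * a) := by
  have hsplit : ∀ c : (ZMod N)ˣ, ∑ x : ZMod N, stdAddChar (x * (a - b * (c : ZMod N)⁻¹)) =
      1 + ∑ v : (ZMod N)ˣ,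
        stdAddChar (((-v * c⁻¹ : (ZMod N)ˣ) : ZMod N) * b + (v : ZMod N) * a) := by
    intro c
    rw [← sub_eq_iff_eq_add', ← AddChar.map_zero_eq_one (stdAddChar (N := N)),
      ← zero_mul (a - _),
      ← sum_units_eq_sum_sub (fun x ↦ stdAddChar (x * (a - b * (c : ZMod N)⁻¹)))]
    refine sum_congr rfl fun v _ ↦ ?_
    push_cast
    ring_nf
  have hsubst : ∀ v : (ZMod N)ˣ,
      ∑ c : (ZMod N)ˣ, stdAddChar (((-v * c⁻¹ : (ZMod N)ˣ) : ZMod N) * b + (v : ZMod N) * a) =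
        ∑ u : (ZMod N)ˣ, stdAddChar ((u : ZMod N) * b + (v : ZMod N) * a) :=
    fun v ↦ Fintype.sum_equiv ((Equiv.inv _).trans (Equiv.mulLeft (-v))) _ _ fun _ ↦ rfl
  rw [sum_congr rfl fun c _ ↦ hsplit c, sum_add_distrib, sum_comm,
    sum_congr rfl fun v _ ↦ hsubst v, sum_const, card_univ, ZMod.card_units, sum_mul_sum,
    sum_comm, nsmul_one, Nat.cast_sub (Fact.out : N.Prime).one_le, Nat.cast_one]
  simp only [AddChar.map_add_eq_mul]

end Prime

/-- The summand of `S^{(N)}(m₁, m₂, n₁, n₂; N, N)`; residues mod `N` are represented in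
`[0, N)`, and `Y_j B C`, `Z_j B C` are the chosen solutions of `Y B + Z C ≡ 1 (mod N)`. -/
noncomputable def longKloostermanTerm (N : ℕ) (m₁ m₂ n₁ n₂ : ℤ) (Y₁ Z₁ Y₂ Z₂ : ℕ → ℕ → ℤ)
    (B₁ C₁ B₂ C₂ : ℕ) : ℂ :=
  if ((N : ℤ) ^ 2 ∣ ((N : ℤ) * C₂ + (B₁ : ℤ) * B₂ + (N : ℤ) * C₁)
      ∧ Nat.gcd B₁ (Nat.gcd C₁ N) = 1 ∧ Nat.gcd B₂ (Nat.gcd C₂ N) = 1 ∧ N ∣ B₁)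
  then e2pi (((m₁ * B₁ + n₁ * (Y₁ B₁ C₁ * N - Z₁ B₁ C₁ * B₂) : ℤ) : ℝ) / (N : ℝ)
         + ((m₂ * B₂ + n₂ * (Y₂ B₂ C₂ * N - Z₂ B₂ C₂ * B₁) : ℤ) : ℝ) / (N : ℝ))
  else 0

noncomputable def longKloostermanSum (N : ℕ) (m₁ m₂ n₁ n₂ : ℤ) (Y₁ Z₁ Y₂ Z₂ : ℕ → ℕ → ℤ) : ℂ :=
  ∑ B₁ ∈ range N, ∑ C₁ ∈ range N, ∑ B₂ ∈ range N, ∑ C₂ ∈ range N,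
    longKloostermanTerm N m₁ m₂ n₁ n₂ Y₁ Z₁ Y₂ Z₂ B₁ C₁ B₂ C₂

section LongKloosterman

variable {N : ℕ} (m₁ m₂ n₁ n₂ : ℤ) (Y₁ Z₁ Y₂ Z₂ : ℕ → ℕ → ℤ)

lemma longKloostermanTerm_of_ne_zero {B₁ : ℕ} (hB₁ : B₁ < N) (h0 : B₁ ≠ 0) (C₁ B₂ C₂ : ℕ) :
    longKloostermanTerm N m₁ m₂ n₁ n₂ Y₁ Z₁ Y₂ Z₂ B₁ C₁ B₂ C₂ = 0 :=
  if_neg fun h ↦ h0 (Nat.eq_zero_of_dvd_of_lt h.2.2.2 hB₁)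

lemma longKloostermanTerm_zero_of_not_coprime {C₁ : ℕ} (hC₁ : ¬ C₁.Coprime N) (B₂ C₂ : ℕ) :
    longKloostermanTerm N m₁ m₂ n₁ n₂ Y₁ Z₁ Y₂ Z₂ 0 C₁ B₂ C₂ = 0 :=
  if_neg fun h ↦ hC₁ (by simpa using h.2.1)

lemma longKloostermanTerm_zero_of_coprime [NeZero N] {C₁ : ℕ} (hC₁ : C₁.Coprime N)
    (B₂ C₂ : ℕ) :
    longKloostermanTerm N m₁ m₂ n₁ n₂ Y₁ Z₁ Y₂ Z₂ 0 C₁ B₂ C₂ =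
      if (C₂ : ZMod N) = -C₁ then stdAddChar ((B₂ : ZMod N) * ((m₂ - n₁ * Z₁ 0 C₁ : ℤ) : ZMod N))
      else 0 := by
  have hcong : (N : ℤ) ^ 2 ∣ N * C₂ + ((0 : ℕ) : ℤ) * B₂ + N * C₁ ↔ (C₂ : ZMod N) = -C₁ := by
    rw [Nat.cast_zero, zero_mul, add_zero, ← mul_add, sq,
      mul_dvd_mul_iff_left (Int.natCast_ne_zero.2 (NeZero.ne N)),
      ← intCast_zmod_eq_zero_iff_dvd, eq_neg_iff_add_eq_zero]
    push_cast
    rfl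
  unfold longKloostermanTerm
  by_cases hC₂ : (C₂ : ZMod N) = -C₁
  · have hcop : C₂.Coprime N :=
      (isUnit_iff_coprime C₂ N).1 (hC₂ ▸ ((isUnit_iff_coprime C₁ N).2 hC₁).neg)
    rw [if_pos hC₂, if_pos ⟨hcong.2 hC₂, by simpa using hC₁, by simp [hcop.gcd_eq_one],
      dvd_zero N⟩, ← add_div, ← Int.cast_add, e2pi_intCast_div]
    push_cast [ZMod.natCast_self]
    ring_nf
  · rw [if_neg hC₂, if_neg fun h ↦ hC₂ (hcong.1 h.1)]

lemma sum_longKloostermanTerm_zero_of_coprime [NeZero N] {C₁ : ℕ} (hC₁ : C₁.Coprime N) :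
    ∑ B₂ ∈ range N, ∑ C₂ ∈ range N, longKloostermanTerm N m₁ m₂ n₁ n₂ Y₁ Z₁ Y₂ Z₂ 0 C₁ B₂ C₂ =
      ∑ x : ZMod N, stdAddChar (x * ((m₂ - n₁ * Z₁ 0 C₁ : ℤ) : ZMod N)) := by
  simp only [longKloostermanTerm_zero_of_coprime m₁ m₂ n₁ n₂ Y₁ Z₁ Y₂ Z₂ hC₁]
  rw [← sum_range_eq_sum_zmod N (fun x ↦ stdAddChar (x * ((m₂ - n₁ * Z₁ 0 C₁ : ℤ) : ZMod N)))]
  refine sum_congr rfl fun B₂ _ ↦ ?_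
  rw [sum_range_eq_sum_zmod N fun y ↦
      if y = -C₁ then stdAddChar ((B₂ : ZMod N) * ((m₂ - n₁ * Z₁ 0 C₁ : ℤ) : ZMod N)) else 0,
    Fintype.sum_ite_eq']

lemma longKloostermanSum_eq_sum_units [Fact N.Prime]
    (hZ₁ : ∀ C : ℕ, C.Coprime N → (N : ℤ) ∣ Z₁ 0 C * C - 1) :
    longKloostermanSum N m₁ m₂ n₁ n₂ Y₁ Z₁ Y₂ Z₂ =
      ∑ c : (ZMod N)ˣ, ∑ x : ZMod N,
        stdAddChar (x * ((m₂ : ZMod N) - (n₁ : ZMod N) * (c : ZMod N)⁻¹)) := by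
  rw [longKloostermanSum, sum_eq_single_of_mem 0 (mem_range.2 (NeZero.pos N))
      fun B₁ hB₁ h0 ↦ sum_eq_zero fun C₁ _ ↦ sum_eq_zero fun B₂ _ ↦ sum_eq_zero fun C₂ _ ↦
        longKloostermanTerm_of_ne_zero m₁ m₂ n₁ n₂ Y₁ Z₁ Y₂ Z₂ (mem_range.1 hB₁) h0 C₁ B₂ C₂,
    ← sum_range_coprime_eq_sum_units N
      (fun c ↦ ∑ x : ZMod N, stdAddChar (x * ((m₂ : ZMod N) - (n₁ : ZMod N) * c⁻¹)))]
  refine sum_congr rfl fun C₁ _ ↦ ?_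
  by_cases hC₁ : C₁.Coprime N
  · have hZ : (Z₁ 0 C₁ : ZMod N) = (C₁ : ZMod N)⁻¹ := by
      refine eq_inv_of_mul_eq_one_left (sub_eq_zero.1 ?_)
      exact_mod_cast (intCast_zmod_eq_zero_iff_dvd _ N).2 (hZ₁ C₁ hC₁)
    rw [if_pos hC₁, sum_longKloostermanTerm_zero_of_coprime m₁ m₂ n₁ n₂ Y₁ Z₁ Y₂ Z₂ hC₁]
    push_cast [hZ]
    rfl
  · rw [if_neg hC₁]
    exact sum_eq_zero fun B₂ _ ↦ sum_eq_zero fun C₂ _ ↦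
      longKloostermanTerm_zero_of_not_coprime m₁ m₂ n₁ n₂ Y₁ Z₁ Y₂ Z₂ hC₁ B₂ C₂

end LongKloosterman

theorem stmt_2_general (N : ℕ) (hN : N.Prime) (m₁ m₂ n₁ n₂ : ℤ)
    (Y₁ Z₁ Y₂ Z₂ : ℕ → ℕ → ℤ)
    (hYZ₁ : ∀ B C : ℕ, Nat.gcd B (Nat.gcd C N) = 1 →
      (N : ℤ) ∣ (Y₁ B C * B + Z₁ B C * C - 1))
    (S : ℂ)
    (hS : S = ∑ B₁ ∈ Finset.range N, ∑ C₁ ∈ Finset.range N,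
        ∑ B₂ ∈ Finset.range N, ∑ C₂ ∈ Finset.range N,
      if ((N : ℤ) ^ 2 ∣ ((N : ℤ) * C₂ + (B₁ : ℤ) * B₂ + (N : ℤ) * C₁)
          ∧ Nat.gcd B₁ (Nat.gcd C₁ N) = 1 ∧ Nat.gcd B₂ (Nat.gcd C₂ N) = 1 ∧ N ∣ B₁)
      then e2pi (((m₁ * B₁ + n₁ * (Y₁ B₁ C₁ * N - Z₁ B₁ C₁ * B₂) : ℤ) : ℝ) / (N : ℝ)
             + ((m₂ * B₂ + n₂ * (Y₂ B₂ C₂ * N - Z₂ B₂ C₂ * B₁) : ℤ) : ℝ) / (N : ℝ))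
      else 0) :
    S = (N : ℂ) - 1 + ramanujanSum N n₁ * ramanujanSum N m₂
    ∧ ((N : ℤ) ∣ n₁ ∧ (N : ℤ) ∣ m₂ → S = (N : ℂ) * ((N : ℂ) - 1))
    ∧ (¬ (N : ℤ) ∣ n₁ ∧ ¬ (N : ℤ) ∣ m₂ → S = (N : ℂ))
    ∧ (¬ ((N : ℤ) ∣ n₁ ∧ (N : ℤ) ∣ m₂) ∧ ¬ (¬ (N : ℤ) ∣ n₁ ∧ ¬ (N : ℤ) ∣ m₂) → S = 0) := by
  have := Fact.mk hN
  have hZ₁ : ∀ C : ℕ, C.Coprime N → (N : ℤ) ∣ Z₁ 0 C * C - 1 := fun C hC ↦ by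
    simpa using hYZ₁ 0 C (by simpa using hC)
  have hsum : S = (N : ℂ) - 1 + ramanujanSum N n₁ * ramanujanSum N m₂ := by
    rw [ramanujanSum_eq_sum_units, ramanujanSum_eq_sum_units,
      ← sum_units_sum_stdAddChar_mul_sub_inv,
      ← longKloostermanSum_eq_sum_units m₁ m₂ n₁ n₂ Y₁ Z₁ Y₂ Z₂ hZ₁]
    exact hS
  refine ⟨hsum, ?_, ?_, ?_⟩ <;> rw [hsum, ramanujanSum_eq, ramanujanSum_eq] <;> grind

/-- the GL(3) long-element Kloosterman sum of prime level N with both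
moduli equal to N.  The sum is stated for an arbitrary choice of auxiliary solutions
Y_j, Z_j of Y_j B_j + Z_j C_j ≡ 1 (mod N); its value does not depend on the choice. -/
theorem stmt_2 (N : ℕ) (hN : N.Prime) (m₁ m₂ n₁ n₂ : ℤ)
    (Y₁ Z₁ Y₂ Z₂ : ℕ → ℕ → ℤ)
    (hYZ₁ : ∀ B C : ℕ, Nat.gcd B (Nat.gcd C N) = 1 →
      (N : ℤ) ∣ (Y₁ B C * B + Z₁ B C * C - 1))
    (hYZ₂ : ∀ B C : ℕ, Nat.gcd B (Nat.gcd C N) = 1 →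
      (N : ℤ) ∣ (Y₂ B C * B + Z₂ B C * C - 1))
    (S : ℂ)
    (hS : S = ∑ B₁ ∈ Finset.range N, ∑ C₁ ∈ Finset.range N,
        ∑ B₂ ∈ Finset.range N, ∑ C₂ ∈ Finset.range N,
      if ((N : ℤ) ^ 2 ∣ ((N : ℤ) * C₂ + (B₁ : ℤ) * B₂ + (N : ℤ) * C₁)
          ∧ Nat.gcd B₁ (Nat.gcd C₁ N) = 1 ∧ Nat.gcd B₂ (Nat.gcd C₂ N) = 1 ∧ N ∣ B₁)
      then e2pi (((m₁ * B₁ + n₁ * (Y₁ B₁ C₁ * N - Z₁ B₁ C₁ * B₂) : ℤ) : ℝ) / (N : ℝ)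
             + ((m₂ * B₂ + n₂ * (Y₂ B₂ C₂ * N - Z₂ B₂ C₂ * B₁) : ℤ) : ℝ) / (N : ℝ))
      else 0) :
    S = (N : ℂ) - 1 + ramanujanSum N n₁ * ramanujanSum N m₂
    ∧ ((N : ℤ) ∣ n₁ ∧ (N : ℤ) ∣ m₂ → S = (N : ℂ) * ((N : ℂ) - 1))
    ∧ (¬ (N : ℤ) ∣ n₁ ∧ ¬ (N : ℤ) ∣ m₂ → S = (N : ℂ))
    ∧ (¬ ((N : ℤ) ∣ n₁ ∧ (N : ℤ) ∣ m₂) ∧ ¬ (¬ (N : ℤ) ∣ n₁ ∧ ¬ (N : ℤ) ∣ m₂) → S = 0) :=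
  stmt_2_general N hN m₁ m₂ n₁ n₂ Y₁ Z₁ Y₂ Z₂ hYZ₁ S hS
end

section
/- Let m₁, n₁, m₂, n₂ be nonzero integers with gcd(m₁m₂n₁n₂, N) = 1, and let X₁, X₂ ≥ N. Assume the bound |S^{(N)}(m₁, m₂, n₁, n₂; D₁, D₂)| ≤ C(ε)·(D₁D₂)^{1/2+ε}·((D₁,D₂)·(m₁n₁,[D₁,D₂])·(m₂n₂,[D₁,D₂]))^{1/2} for all N | D₁, N | D₂ (Stevens' bound). Then Σ_{N|D₁ ≤ X₁} Σ_{N|D₂ ≤ X₂} |S^{(N)}(m₁, m₂, n₁, n₂; D₁, D₂)| ≪_ε (X₁X₂)^{3/2+ε} (m₁n₂m₂n₁)^ε N^{−3/2}. -/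
/-!
Write `Dᵢ = N δᵢ`, `Mᵢ = |mᵢ nᵢ|`, `M = M₁ M₂`, `d = (δ₁, δ₂)` and `δᵢ = d eᵢ`. As `N` is coprime
to `M`, `(Mᵢ, [D₁, D₂]) = (Mᵢ, [δ₁, δ₂])`, and `(M₁, L)(M₂, L) ≤ (M, L)²`; so Stevens' bound gives
`|S| ≤ Cε (X₁X₂)^{1/2+ε} N^{1/2} d^{1/2} (M, [δ₁, δ₂])`, where
`(M, [δ₁, δ₂]) ≤ (M, d)(M, e₁)(M, e₂)`. Summing first over `eᵢ ≤ Xᵢ/(Nd)` with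
`∑_{e ≤ K} (M, e) ≤ τ(M) K`, then over `d` with `∑_d (M, d) d^{-3/2} ≤ τ(M) ζ(3/2)`, bounds the
sum by `Cε τ(M)³ ζ(3/2) (X₁X₂)^{3/2+ε} N^{-3/2}`; finally `τ(M) ≪_ε M^{ε/3}`.
-/

open Finset

lemma natCast_add_one_le_mul_pow {b : ℝ} (hb : 1 < b) (k : ℕ) :
    (k + 1 : ℝ) ≤ (1 + (Real.log b)⁻¹) * b ^ k := by
  have hL : 0 < Real.log b := Real.log_pos hb
  have hexp : k * Real.log b + 1 ≤ b ^ k := by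
    rw [← Real.rpow_natCast, Real.rpow_def_of_pos (by linarith), mul_comm]
    exact Real.add_one_le_exp _
  have hinv : (Real.log b)⁻¹ * Real.log b = 1 := inv_mul_cancel₀ hL.ne'
  calc (k + 1 : ℝ) ≤ (1 + (Real.log b)⁻¹) * (k * Real.log b + 1) := by
        nlinarith [inv_pos.mpr hL, mul_nonneg (Nat.cast_nonneg k) hL.le]
    _ ≤ (1 + (Real.log b)⁻¹) * b ^ k := by gcongr

lemma natCast_add_one_le_pow {b : ℝ} (hb : 2 ≤ b) (k : ℕ) : (k + 1 : ℝ) ≤ b ^ k :=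
  calc (k + 1 : ℝ) ≤ 2 ^ k := by exact_mod_cast Nat.lt_two_pow_self
    _ ≤ b ^ k := pow_le_pow_left₀ (by norm_num) hb k

theorem card_divisors_le_mul_rpow {ε : ℝ} (hε : 0 < ε) :
    ∃ C : ℝ, 0 < C ∧ ∀ n : ℕ, n ≠ 0 → (#n.divisors : ℝ) ≤ C * (n : ℝ) ^ ε := by
  set A : ℝ := 1 + (ε * Real.log 2)⁻¹
  have hA : 1 ≤ A := le_add_of_nonneg_right (by positivity)
  set B : ℕ := ⌈(2 : ℝ) ^ ε⁻¹⌉₊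
  refine ⟨A ^ B, by positivity, fun n hn => ?_⟩
  -- only the primes with `p ^ ε < 2`, of which there are at most `B`, cost a factor `A`
  let c : ℕ → ℝ := fun p => if (p : ℝ) ^ ε < 2 then A else 1
  have hlocal : ∀ p ∈ n.primeFactors,
      ((n.factorization p + 1 : ℕ) : ℝ) ≤ c p * ((p : ℝ) ^ n.factorization p) ^ ε := by
    intro p hp
    have hp2 : (2 : ℝ) ≤ p := by exact_mod_cast (Nat.prime_of_mem_primeFactors hp).two_le
    rw [← Real.rpow_pow_comm (by positivity)]
    push_cast
    by_cases hsmall : (p : ℝ) ^ ε < 2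
    · simp only [c, if_pos hsmall]
      have hb : 1 < (p : ℝ) ^ ε := Real.one_lt_rpow (by linarith) hε
      refine (natCast_add_one_le_mul_pow hb _).trans (mul_le_mul_of_nonneg_right ?_ (by positivity))
      rw [Real.log_rpow (by positivity)]
      have hlog : ε * Real.log 2 ≤ ε * Real.log p := by gcongr
      exact add_le_add_right (inv_anti₀ (by positivity) hlog) 1
    · simp only [c, if_neg hsmall, one_mul]
      exact natCast_add_one_le_pow (not_lt.mp hsmall) _
  have hc : ∏ p ∈ n.primeFactors, c p ≤ A ^ B := by
    rw [prod_ite, prod_const, prod_const_one, mul_one]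
    refine pow_le_pow_right₀ hA ((card_le_card fun p hp => ?_).trans (card_range B).le)
    rw [mem_filter] at hp
    rw [mem_range, Nat.lt_ceil, Real.lt_rpow_inv_iff_of_pos (by positivity) (by norm_num) hε]
    exact hp.2
  have hprod : ∏ p ∈ n.primeFactors, ((p : ℝ) ^ n.factorization p) ^ ε = (n : ℝ) ^ ε := by
    rw [Real.finsetProd_rpow _ _ (fun p _ => by positivity)]
    congr 1
    conv_rhs => rw [← Nat.prod_factorization_pow_eq_self hn]
    rw [Finsupp.prod, Nat.support_factorization]
    push_cast
    rfl
  calc (#n.divisors : ℝ) = ∏ p ∈ n.primeFactors, ((n.factorization p + 1 : ℕ) : ℝ) := by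
        rw [Nat.card_divisors hn]; push_cast; rfl
    _ ≤ ∏ p ∈ n.primeFactors, c p * ((p : ℝ) ^ n.factorization p) ^ ε :=
        prod_le_prod (fun _ _ => by positivity) hlocal
    _ = (∏ p ∈ n.primeFactors, c p) * (n : ℝ) ^ ε := by rw [prod_mul_distrib, hprod]
    _ ≤ A ^ B * (n : ℝ) ^ ε := by gcongr

lemma sum_Icc_filter_dvd {β : Type*} [AddCommMonoid β] {d : ℕ} (hd : 0 < d) (K : ℕ)
    (f : ℕ → β) :
    ∑ t ∈ Icc 1 K with d ∣ t, f t = ∑ j ∈ Icc 1 (K / d), f (d * j) := by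
  refine sum_nbij' (· / d) (d * ·) (fun t ht => ?_) (fun j hj => ?_)
    (fun t ht => Nat.mul_div_cancel' (mem_filter.1 ht).2)
    (fun j _ => Nat.mul_div_cancel_left j hd) (fun t ht => ?_)
  · obtain ⟨ht, hdt⟩ := mem_filter.1 ht
    obtain ⟨ht1, htK⟩ := mem_Icc.1 ht
    exact mem_Icc.2 ⟨Nat.div_pos (Nat.le_of_dvd ht1 hdt) hd, Nat.div_le_div_right htK⟩
  · obtain ⟨hj1, hjK⟩ := mem_Icc.1 hj
    refine mem_filter.2 ⟨mem_Icc.2 ⟨Nat.mul_pos hd hj1, ?_⟩, dvd_mul_right d j⟩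
    exact (Nat.mul_le_mul_left d hjK).trans (Nat.mul_div_le K d)
  · rw [Nat.mul_div_cancel' (mem_filter.1 ht).2]

lemma sum_gcd_mul_le {M K : ℕ} (hM : M ≠ 0) {g : ℕ → ℝ} (hg : ∀ t, 0 ≤ g t) {c : ℝ}
    (hc : ∀ d ∈ M.divisors, d * ∑ t ∈ Icc 1 K with d ∣ t, g t ≤ c) :
    ∑ t ∈ Icc 1 K, (M.gcd t : ℝ) * g t ≤ #M.divisors * c := by
  -- `gcd M t` is one of the divisors `d ∣ M` with `d ∣ t`; then swap the two sums
  calc ∑ t ∈ Icc 1 K, (M.gcd t : ℝ) * g t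
      ≤ ∑ t ∈ Icc 1 K, ∑ d ∈ M.divisors, if d ∣ t then (d : ℝ) * g t else 0 := by
        refine sum_le_sum fun t _ => ?_
        have hmem : M.gcd t ∈ M.divisors := Nat.mem_divisors.2 ⟨Nat.gcd_dvd_left M t, hM⟩
        have := single_le_sum (f := fun d => if d ∣ t then (d : ℝ) * g t else 0)
          (fun d _ => by
            split_ifs
            exacts [mul_nonneg d.cast_nonneg (hg t), le_rfl]) hmem
        simpa only [if_pos (Nat.gcd_dvd_right M t)] using this
    _ = ∑ d ∈ M.divisors, (d : ℝ) * ∑ t ∈ Icc 1 K with d ∣ t, g t := by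
        rw [sum_comm]
        simp_rw [mul_sum, sum_filter]
    _ ≤ ∑ _d ∈ M.divisors, c := sum_le_sum hc
    _ = #M.divisors * c := by rw [sum_const, nsmul_eq_mul]

lemma sum_gcd_le {M : ℕ} (hM : M ≠ 0) (K : ℕ) :
    ∑ t ∈ Icc 1 K, (M.gcd t : ℝ) ≤ #M.divisors * K := by
  simpa using sum_gcd_mul_le (g := fun _ => 1) (c := K) hM (fun _ => zero_le_one) fun d hd => by
    rw [sum_Icc_filter_dvd (Nat.pos_of_mem_divisors hd), sum_const, Nat.card_Icc,
      nsmul_eq_mul, mul_one, Nat.add_sub_cancel, ← Nat.cast_mul]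
    exact_mod_cast Nat.mul_div_le K d

lemma sum_gcd_mul_rpow_le {M : ℕ} (hM : M ≠ 0) (K : ℕ) :
    ∑ t ∈ Icc 1 K, (M.gcd t : ℝ) * (t : ℝ) ^ (-(3 / 2) : ℝ) ≤
      #M.divisors * ∑' n : ℕ, (n : ℝ) ^ (-(3 / 2) : ℝ) := by
  have hsum : Summable fun n : ℕ => (n : ℝ) ^ (-(3 / 2) : ℝ) :=
    Real.summable_nat_rpow.2 (by norm_num)
  refine sum_gcd_mul_le hM (fun t => by positivity) fun d hd => ?_
  have hd : (0 : ℝ) < d := by exact_mod_cast Nat.pos_of_mem_divisors hd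
  have hd' : (d : ℝ) * (d : ℝ) ^ (-(3 / 2) : ℝ) ≤ 1 := by
    rw [← Real.rpow_one_add' hd.le (by norm_num)]
    exact Real.rpow_le_one_of_one_le_of_nonpos (by exact_mod_cast hd) (by norm_num)
  calc (d : ℝ) * ∑ t ∈ Icc 1 K with d ∣ t, (t : ℝ) ^ (-(3 / 2) : ℝ)
      = (d : ℝ) * (d : ℝ) ^ (-(3 / 2) : ℝ) * ∑ j ∈ Icc 1 (K / d), (j : ℝ) ^ (-(3 / 2) : ℝ) := by
        rw [sum_Icc_filter_dvd (by exact_mod_cast hd)]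
        simp_rw [Nat.cast_mul, Real.mul_rpow hd.le (Nat.cast_nonneg _)]
        rw [← mul_sum, mul_assoc]
    _ ≤ 1 * ∑' n : ℕ, (n : ℝ) ^ (-(3 / 2) : ℝ) :=
        mul_le_mul hd' (hsum.sum_le_tsum _ fun n _ => by positivity) (by positivity) zero_le_one
    _ = ∑' n : ℕ, (n : ℝ) ^ (-(3 / 2) : ℝ) := one_mul _

lemma lcm_eq_gcd_mul (a b : ℕ) : a.lcm b = a.gcd b * (a / a.gcd b * (b / a.gcd b)) := by
  rcases Nat.eq_zero_or_pos (a.gcd b) with hg | hg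
  · obtain ⟨rfl, rfl⟩ := Nat.gcd_eq_zero_iff.1 hg
    simp
  · refine Nat.eq_of_mul_eq_mul_left hg ?_
    obtain ⟨e₁, he₁⟩ := Nat.gcd_dvd_left a b
    obtain ⟨e₂, he₂⟩ := Nat.gcd_dvd_right a b
    rw [Nat.gcd_mul_lcm, Nat.div_eq_of_eq_mul_right hg he₁, Nat.div_eq_of_eq_mul_right hg he₂]
    calc a * b = a.gcd b * e₁ * (a.gcd b * e₂) := by rw [← he₁, ← he₂]
      _ = a.gcd b * (a.gcd b * (e₁ * e₂)) := by ring

lemma gcd_lcm_le {M : ℕ} (hM : M ≠ 0) (a b : ℕ) :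
    M.gcd (a.lcm b) ≤ M.gcd (a.gcd b) * (M.gcd (a / a.gcd b) * M.gcd (b / a.gcd b)) := by
  rw [lcm_eq_gcd_mul]
  refine Nat.le_of_dvd (by positivity) ((Nat.gcd_mul_right_dvd_mul_gcd _ _ _).trans ?_)
  exact mul_dvd_mul_left _ (Nat.gcd_mul_right_dvd_mul_gcd _ _ _)

lemma sum_sum_le_of_le_div_gcd {f : ℕ → ℕ → ℝ} {F : ℕ → ℕ → ℕ → ℝ}
    (hF : ∀ d e₁ e₂, 0 ≤ F d e₁ e₂)
    (hf : ∀ a b, f a b ≤ F (a.gcd b) (a / a.gcd b) (b / a.gcd b)) (K₁ K₂ : ℕ) :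
    ∑ a ∈ Icc 1 K₁, ∑ b ∈ Icc 1 K₂, f a b ≤
      ∑ d ∈ Icc 1 K₁, ∑ e₁ ∈ Icc 1 (K₁ / d), ∑ e₂ ∈ Icc 1 (K₂ / d), F d e₁ e₂ := by
  -- the common divisor `d = gcd a b` is one term of the sum over all common divisors `d ≤ K₁`
  calc ∑ a ∈ Icc 1 K₁, ∑ b ∈ Icc 1 K₂, f a b
      ≤ ∑ a ∈ Icc 1 K₁, ∑ b ∈ Icc 1 K₂, ∑ d ∈ Icc 1 K₁,
          if d ∣ a then (if d ∣ b then F d (a / d) (b / d) else 0) else 0 := by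
        refine sum_le_sum fun a ha => sum_le_sum fun b _ => (hf a b).trans ?_
        obtain ⟨ha1, haK⟩ := mem_Icc.1 ha
        have hmem : a.gcd b ∈ Icc 1 K₁ :=
          mem_Icc.2 ⟨Nat.gcd_pos_of_pos_left b ha1, (Nat.gcd_le_left b ha1).trans haK⟩
        have := single_le_sum (f := fun d =>
            if d ∣ a then (if d ∣ b then F d (a / d) (b / d) else 0) else 0)
          (fun d _ => by split_ifs <;> first | exact hF _ _ _ | exact le_rfl) hmem
        simpa only [if_pos (Nat.gcd_dvd_left a b), if_pos (Nat.gcd_dvd_right a b)] using this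
    _ = ∑ d ∈ Icc 1 K₁, ∑ a ∈ Icc 1 K₁ with d ∣ a, ∑ b ∈ Icc 1 K₂ with d ∣ b,
          F d (a / d) (b / d) := by
        simp_rw [sum_filter]
        rw [sum_congr rfl fun a _ => sum_comm, sum_comm]
        refine sum_congr rfl fun d _ => sum_congr rfl fun a _ => ?_
        split_ifs <;> simp
    _ = ∑ d ∈ Icc 1 K₁, ∑ e₁ ∈ Icc 1 (K₁ / d), ∑ e₂ ∈ Icc 1 (K₂ / d), F d e₁ e₂ := by
        refine sum_congr rfl fun d hd => ?_
        have hd : 0 < d := (mem_Icc.1 hd).1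
        simp_rw [sum_Icc_filter_dvd hd, Nat.mul_div_cancel_left _ hd]

lemma sum_sum_sqrt_gcd_mul_gcd_lcm_le {M : ℕ} (hM : M ≠ 0) (K₁ K₂ : ℕ) :
    ∑ a ∈ Icc 1 K₁, ∑ b ∈ Icc 1 K₂, √(a.gcd b : ℝ) * (M.gcd (a.lcm b) : ℝ) ≤
      (#M.divisors : ℝ) ^ 3 * (∑' n : ℕ, (n : ℝ) ^ (-(3 / 2) : ℝ)) * (K₁ * K₂) := by
  set τ : ℝ := (#M.divisors : ℝ)
  have hF : ∀ d e₁ e₂ : ℕ, 0 ≤ √(d : ℝ) * M.gcd d * ((M.gcd e₁ : ℝ) * M.gcd e₂) :=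
    fun _ _ _ => by positivity
  refine (sum_sum_le_of_le_div_gcd hF (fun a b => ?_) K₁ K₂).trans ?_
  · rw [mul_assoc]
    gcongr
    exact_mod_cast gcd_lcm_le hM a b
  calc ∑ d ∈ Icc 1 K₁, ∑ e₁ ∈ Icc 1 (K₁ / d), ∑ e₂ ∈ Icc 1 (K₂ / d),
        √(d : ℝ) * M.gcd d * ((M.gcd e₁ : ℝ) * M.gcd e₂)
      = ∑ d ∈ Icc 1 K₁, √(d : ℝ) * M.gcd d *
          ((∑ e₁ ∈ Icc 1 (K₁ / d), (M.gcd e₁ : ℝ)) * ∑ e₂ ∈ Icc 1 (K₂ / d), (M.gcd e₂ : ℝ)) := by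
        simp_rw [sum_mul_sum, mul_sum]
    _ ≤ ∑ d ∈ Icc 1 K₁, √(d : ℝ) * M.gcd d * ((τ * (K₁ / d : ℕ)) * (τ * (K₂ / d : ℕ))) := by
        gcongr with d
        exacts [sum_gcd_le hM _, sum_gcd_le hM _]
    _ ≤ ∑ d ∈ Icc 1 K₁, (M.gcd d : ℝ) * (d : ℝ) ^ (-(3 / 2) : ℝ) * (τ ^ 2 * (K₁ * K₂)) := by
        refine sum_le_sum fun d hd => ?_
        have hd : (0 : ℝ) < d := by exact_mod_cast (mem_Icc.1 hd).1
        have hsqrt : √(d : ℝ) / d ^ 2 = (d : ℝ) ^ (-(3 / 2) : ℝ) := by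
          rw [Real.sqrt_eq_rpow, ← Real.rpow_natCast, ← Real.rpow_sub hd]
          norm_num
        calc √(d : ℝ) * M.gcd d * ((τ * (K₁ / d : ℕ)) * (τ * (K₂ / d : ℕ)))
            ≤ √(d : ℝ) * M.gcd d * ((τ * (K₁ / d)) * (τ * (K₂ / d))) := by
              gcongr <;> exact Nat.cast_div_le
          _ = (M.gcd d : ℝ) * (√(d : ℝ) / d ^ 2) * (τ ^ 2 * (K₁ * K₂)) := by ring
          _ = (M.gcd d : ℝ) * (d : ℝ) ^ (-(3 / 2) : ℝ) * (τ ^ 2 * (K₁ * K₂)) := by rw [hsqrt]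
    _ ≤ τ * (∑' n : ℕ, (n : ℝ) ^ (-(3 / 2) : ℝ)) * (τ ^ 2 * (K₁ * K₂)) := by
        rw [← sum_mul]
        gcongr
        exact sum_gcd_mul_rpow_le hM K₁
    _ = τ ^ 3 * (∑' n : ℕ, (n : ℝ) ^ (-(3 / 2) : ℝ)) * (K₁ * K₂) := by ring

lemma gcd_mul_gcd_le_gcd_mul_sq {a b : ℕ} (hab : a * b ≠ 0) (L : ℕ) :
    a.gcd L * b.gcd L ≤ (a * b).gcd L ^ 2 := by
  have hdvd : a.gcd L * b.gcd L ∣ (a * b).gcd (L * L) :=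
    Nat.dvd_gcd (mul_dvd_mul (Nat.gcd_dvd_left a L) (Nat.gcd_dvd_left b L))
      (mul_dvd_mul (Nat.gcd_dvd_right a L) (Nat.gcd_dvd_right b L))
  refine Nat.le_of_dvd (by positivity) (hdvd.trans ?_)
  rw [sq]
  exact Nat.gcd_mul_right_dvd_mul_gcd _ _ _

lemma sqrt_gcd_mul_gcd_lcm_mul_le {N M₁ M₂ : ℕ} (hM : M₁ * M₂ ≠ 0)
    (hcop : N.Coprime (M₁ * M₂)) (a b : ℕ) :
    (((N * a).gcd (N * b) : ℝ) * (M₁.gcd ((N * a).lcm (N * b)) : ℝ) *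
        (M₂.gcd ((N * a).lcm (N * b)) : ℝ)) ^ ((1 : ℝ) / 2) ≤
      √(N : ℝ) * (√(a.gcd b : ℝ) * ((M₁ * M₂).gcd (a.lcm b) : ℝ)) := by
  have hgcd : M₁.gcd (N * a.lcm b) * M₂.gcd (N * a.lcm b) ≤ ((M₁ * M₂).gcd (a.lcm b)) ^ 2 := by
    simpa only [Nat.Coprime.gcd_mul_left_cancel_right _ hcop] using
      gcd_mul_gcd_le_gcd_mul_sq hM (N * a.lcm b)
  rw [← Real.sqrt_eq_rpow, Nat.gcd_mul_left, Nat.lcm_mul_left, Nat.cast_mul, mul_assoc,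
    mul_assoc]
  calc √((N : ℝ) * ((a.gcd b : ℝ) * ((M₁.gcd (N * a.lcm b) : ℝ) * M₂.gcd (N * a.lcm b))))
      ≤ √((N : ℝ) * ((a.gcd b : ℝ) * ((M₁ * M₂).gcd (a.lcm b) : ℝ) ^ 2)) := by
        gcongr
        exact_mod_cast hgcd
    _ = √(N : ℝ) * (√(a.gcd b : ℝ) * ((M₁ * M₂).gcd (a.lcm b) : ℝ)) := by
        rw [Real.sqrt_mul (by positivity), Real.sqrt_mul (by positivity),
          Real.sqrt_sq (by positivity)]

lemma natCast_floor_div_le {X : ℝ} (hX : 0 ≤ X) (N : ℕ) : ((⌊X⌋₊ / N : ℕ) : ℝ) ≤ X / N := by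
  rw [← Nat.floor_div_natCast]
  exact Nat.floor_le (by positivity)

lemma natCast_mul_le_of_le_floor_div {X : ℝ} (hX : 0 ≤ X) {N a : ℕ} (ha : a ≤ ⌊X⌋₊ / N) :
    ((N * a : ℕ) : ℝ) ≤ X :=
  (Nat.le_floor_iff hX).1 ((Nat.mul_le_mul_left N ha).trans (Nat.mul_div_le _ _))

/-- Stevens' bound, with `M₁ = |m₁ n₁|` and `M₂ = |m₂ n₂|`. -/
def StevensBound (ε Cε : ℝ) (N M₁ M₂ : ℕ) (S : ℕ → ℕ → ℂ) : Prop :=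
  ∀ D₁ D₂ : ℕ, 0 < D₁ → 0 < D₂ → N ∣ D₁ → N ∣ D₂ →
    ‖S D₁ D₂‖ ≤ Cε * ((D₁ * D₂ : ℕ) : ℝ) ^ ((1 : ℝ) / 2 + ε) *
      ((D₁.gcd D₂ : ℝ) * (M₁.gcd (D₁.lcm D₂) : ℝ) * (M₂.gcd (D₁.lcm D₂) : ℝ)) ^ ((1 : ℝ) / 2)

lemma norm_le_of_stevensBound {ε Cε : ℝ} (hε : 0 ≤ ε) (hCε : 0 ≤ Cε) {N M₁ M₂ : ℕ}
    (hM : M₁ * M₂ ≠ 0) (hcop : N.Coprime (M₁ * M₂)) {S : ℕ → ℕ → ℂ}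
    (hS : StevensBound ε Cε N M₁ M₂ S) {a b : ℕ} (ha : 0 < a) (hb : 0 < b) (hN : 0 < N)
    {X : ℝ} (hX : ((N * a * (N * b) : ℕ) : ℝ) ≤ X) :
    ‖S (N * a) (N * b)‖ ≤
      Cε * X ^ ((1 : ℝ) / 2 + ε) * √(N : ℝ) * (√(a.gcd b : ℝ) * ((M₁ * M₂).gcd (a.lcm b) : ℝ)) := by
  have hX0 : 0 ≤ X := (Nat.cast_nonneg _).trans hX
  have hXpow : ((N * a * (N * b) : ℕ) : ℝ) ^ ((1 : ℝ) / 2 + ε) ≤ X ^ ((1 : ℝ) / 2 + ε) :=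
    Real.rpow_le_rpow (by positivity) hX (by linarith)
  calc ‖S (N * a) (N * b)‖
      ≤ _ := hS _ _ (by positivity) (by positivity) (dvd_mul_right N a) (dvd_mul_right N b)
    _ ≤ Cε * X ^ ((1 : ℝ) / 2 + ε) *
        (√(N : ℝ) * (√(a.gcd b : ℝ) * ((M₁ * M₂).gcd (a.lcm b) : ℝ))) := by
        gcongr
        exact sqrt_gcd_mul_gcd_lcm_mul_le hM hcop a b
    _ = _ := by ring

theorem sum_norm_le_of_stevensBound {ε Cε : ℝ} (hε : 0 ≤ ε) (hCε : 0 ≤ Cε) {N M₁ M₂ : ℕ}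
    (hN : 0 < N) (hM : M₁ * M₂ ≠ 0) (hcop : N.Coprime (M₁ * M₂)) {S : ℕ → ℕ → ℂ}
    (hS : StevensBound ε Cε N M₁ M₂ S) {X₁ X₂ : ℝ} (hX₁ : 0 < X₁) (hX₂ : 0 < X₂) :
    ∑ D₁ ∈ Icc 1 ⌊X₁⌋₊ with N ∣ D₁, ∑ D₂ ∈ Icc 1 ⌊X₂⌋₊ with N ∣ D₂, ‖S D₁ D₂‖ ≤
      Cε * (#(M₁ * M₂).divisors : ℝ) ^ 3 * (∑' n : ℕ, (n : ℝ) ^ (-(3 / 2) : ℝ)) *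
        (X₁ * X₂) ^ ((3 : ℝ) / 2 + ε) * (N : ℝ) ^ (-(3 : ℝ) / 2) := by
  set c : ℝ := Cε * (X₁ * X₂) ^ ((1 : ℝ) / 2 + ε) * √(N : ℝ)
  have hX : (X₁ * X₂) ^ ((3 : ℝ) / 2 + ε) = (X₁ * X₂) ^ ((1 : ℝ) / 2 + ε) * (X₁ * X₂) := by
    rw [← Real.rpow_add_one (by positivity)]
    ring_nf
  have hN32 : (N : ℝ) ^ (-(3 : ℝ) / 2) = √(N : ℝ) / (N : ℝ) ^ 2 := by
    rw [Real.sqrt_eq_rpow, ← Real.rpow_natCast, ← Real.rpow_sub (by positivity)]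
    norm_num
  rw [sum_Icc_filter_dvd hN]
  simp_rw [sum_Icc_filter_dvd hN]
  calc _ ≤ ∑ a ∈ Icc 1 (⌊X₁⌋₊ / N), ∑ b ∈ Icc 1 (⌊X₂⌋₊ / N),
        c * (√(a.gcd b : ℝ) * ((M₁ * M₂).gcd (a.lcm b) : ℝ)) := by
        refine sum_le_sum fun a ha => sum_le_sum fun b hb => ?_
        obtain ⟨ha1, haK⟩ := mem_Icc.1 ha
        obtain ⟨hb1, hbK⟩ := mem_Icc.1 hb
        refine norm_le_of_stevensBound hε hCε hM hcop hS ha1 hb1 hN ?_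
        rw [Nat.cast_mul]
        exact mul_le_mul (natCast_mul_le_of_le_floor_div hX₁.le haK)
          (natCast_mul_le_of_le_floor_div hX₂.le hbK) (by positivity) hX₁.le
    _ = c * ∑ a ∈ Icc 1 (⌊X₁⌋₊ / N), ∑ b ∈ Icc 1 (⌊X₂⌋₊ / N),
        √(a.gcd b : ℝ) * ((M₁ * M₂).gcd (a.lcm b) : ℝ) := by simp_rw [mul_sum]
    _ ≤ c * ((#(M₁ * M₂).divisors : ℝ) ^ 3 * (∑' n : ℕ, (n : ℝ) ^ (-(3 / 2) : ℝ)) *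
          (((⌊X₁⌋₊ / N : ℕ) : ℝ) * ((⌊X₂⌋₊ / N : ℕ) : ℝ))) := by
        gcongr
        exact sum_sum_sqrt_gcd_mul_gcd_lcm_le hM _ _
    _ ≤ c * ((#(M₁ * M₂).divisors : ℝ) ^ 3 * (∑' n : ℕ, (n : ℝ) ^ (-(3 / 2) : ℝ)) *
          (X₁ / N * (X₂ / N))) := by
        gcongr
        exacts [natCast_floor_div_le hX₁.le N, natCast_floor_div_le hX₂.le N]
    _ = _ := by
        rw [hX, hN32]
        ring

/-- assuming Stevens' pointwise bound for the level-N GL(3)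
long-element Kloosterman sums, the average over moduli D₁ ≤ X₁, D₂ ≤ X₂
divisible by N is ≪_ε (X₁X₂)^{3/2+ε} (m₁n₂m₂n₁)^ε N^{-3/2}. -/
theorem stmt_9 (ε Cε : ℝ) (hε : 0 < ε) (hCε : 0 < Cε) :
    ∃ C : ℝ, 0 < C ∧
      ∀ (N : ℕ), 0 < N → ∀ (m₁ m₂ n₁ n₂ : ℤ),
        m₁ ≠ 0 → m₂ ≠ 0 → n₁ ≠ 0 → n₂ ≠ 0 →
        Int.gcd (m₁ * m₂ * n₁ * n₂) (N : ℤ) = 1 →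
        ∀ (S : ℕ → ℕ → ℂ),
        (∀ D₁ D₂ : ℕ, 0 < D₁ → 0 < D₂ → N ∣ D₁ → N ∣ D₂ →
          ‖S D₁ D₂‖ ≤
            Cε * ((D₁ * D₂ : ℕ) : ℝ) ^ ((1 : ℝ) / 2 + ε) *
              (((Nat.gcd D₁ D₂ : ℕ) : ℝ) * ((Int.gcd (m₁ * n₁) ((Nat.lcm D₁ D₂ : ℕ) : ℤ) : ℕ) : ℝ)
                * ((Int.gcd (m₂ * n₂) ((Nat.lcm D₁ D₂ : ℕ) : ℤ) : ℕ) : ℝ)) ^ ((1 : ℝ) / 2)) →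
        ∀ X₁ X₂ : ℝ, (N : ℝ) ≤ X₁ → (N : ℝ) ≤ X₂ →
          (∑ D₁ ∈ (Finset.Icc 1 ⌊X₁⌋₊).filter (fun D => N ∣ D),
            ∑ D₂ ∈ (Finset.Icc 1 ⌊X₂⌋₊).filter (fun D => N ∣ D),
              ‖S D₁ D₂‖)
            ≤ C * (X₁ * X₂) ^ ((3 : ℝ) / 2 + ε) *
                ((|m₁ * n₂ * m₂ * n₁| : ℤ) : ℝ) ^ ε * (N : ℝ) ^ (-(3 : ℝ) / 2) := by
  obtain ⟨Cτ, hCτ, hτ⟩ := card_divisors_le_mul_rpow (ε := ε / 3) (by positivity)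
  set Z : ℝ := ∑' n : ℕ, (n : ℝ) ^ (-(3 / 2) : ℝ)
  have hZ : 0 < Z :=
    (Real.summable_nat_rpow.2 (by norm_num)).tsum_pos (fun _ => by positivity) 1 (by norm_num)
  refine ⟨Cε * Cτ ^ 3 * Z, by positivity, ?_⟩
  intro N hN m₁ m₂ n₁ n₂ hm₁ hm₂ hn₁ hn₂ hcop S hS X₁ X₂ hX₁ hX₂
  set M := (m₁ * n₁).natAbs * (m₂ * n₂).natAbs
  have hM : M ≠ 0 := by simp [M, hm₁, hm₂, hn₁, hn₂]
  have hMabs : ((|m₁ * n₂ * m₂ * n₁| : ℤ) : ℝ) = (M : ℝ) := by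
    rw [Nat.cast_mul, Nat.cast_natAbs, Nat.cast_natAbs, ← Int.cast_mul, ← abs_mul]
    ring_nf
  have hNM : N.Coprime M := by
    rw [show M = (m₁ * m₂ * n₁ * n₂).natAbs by simp only [M, ← Int.natAbs_mul]; ring_nf]
    exact Nat.Coprime.symm (by simpa only [Int.gcd_eq_natAbs, Int.natAbs_natCast] using hcop)
  have hS' : StevensBound ε Cε N (m₁ * n₁).natAbs (m₂ * n₂).natAbs S := by
    simpa only [StevensBound, Int.gcd_eq_natAbs, Int.natAbs_natCast] using hS
  have hMε : ((M : ℝ) ^ (ε / 3)) ^ 3 = (M : ℝ) ^ ε := by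
    rw [← Real.rpow_natCast, ← Real.rpow_mul (Nat.cast_nonneg _)]
    norm_num
  have hX₁0 : 0 < X₁ := (Nat.cast_pos.2 hN).trans_le hX₁
  have hX₂0 : 0 < X₂ := (Nat.cast_pos.2 hN).trans_le hX₂
  calc _ ≤ _ := sum_norm_le_of_stevensBound hε.le hCε.le hN hM hNM hS' hX₁0 hX₂0
    _ ≤ Cε * (Cτ * (M : ℝ) ^ (ε / 3)) ^ 3 * Z *
          (X₁ * X₂) ^ ((3 : ℝ) / 2 + ε) * (N : ℝ) ^ (-(3 : ℝ) / 2) := by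
        gcongr
        exact hτ M hM
    _ = _ := by
        rw [hMabs, mul_pow, hMε]
        ring
end

section
/- For real numbers Ξ₁, Ξ₂ ≥ 1, the Lebesgue measure of the set of (x₁, x₂, x₃) ∈ R³ satisfying (x₁x₂ − x₃)² + x₁² + 1 ≍ Ξ₁ and x₃² + x₂² + 1 ≍ Ξ₂ (i.e., each quantity lies between c·Ξᵢ and C·Ξᵢ for fixed constants 0 < c < C) is ≪_{ε,c,C} (Ξ₁Ξ₂)^{1/2+ε} for every ε > 0. -/
/-!
The region lies in the box `|x₁| ≤ A`, `|x₂|, |x₃| ≤ B`, `|x₁x₂ - x₃| ≤ A` with `A² ≍ Ξ₁`,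
`B² ≍ Ξ₂`. For fixed `x₁ = t ≠ 0` and `x₃`, the coordinate `x₂` ranges over an interval of length
at most `2 min(B, A/|t|) ≤ 2 B^γ (A/|t|)^(1-γ)`; since `|t|^(γ-1)` is integrable near `0`,
integrating over `x₃` and `t` gives the volume bound `≪ A B^(1+γ) / γ`, and `γ = min ε 1`
turns this into `(Ξ₁Ξ₂)^(1/2+ε)`.
-/

open MeasureTheory Set
open scoped ENNReal

theorem Real.min_le_rpow_mul_rpow {a b γ : ℝ} (ha : 0 ≤ a) (hb : 0 ≤ b) (hγ₀ : 0 ≤ γ)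
    (hγ₁ : γ ≤ 1) : min a b ≤ a ^ γ * b ^ (1 - γ) := by
  have hm : 0 ≤ min a b := le_min ha hb
  calc min a b = min a b ^ γ * min a b ^ (1 - γ) := by
        rw [← Real.rpow_add' hm (by norm_num), add_sub_cancel, Real.rpow_one]
    _ ≤ a ^ γ * b ^ (1 - γ) := by
        gcongr
        exacts [min_le_left a b, min_le_right a b]

theorem Real.sqrt_rpow_le_rpow {X a b : ℝ} (hX : 1 ≤ X) (hab : a ≤ 2 * b) :
    √X ^ a ≤ X ^ b := by
  rw [Real.sqrt_eq_rpow, ← Real.rpow_mul (by linarith)]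
  exact Real.rpow_le_rpow_of_exponent_le hX (by linarith)

theorem lintegral_Icc_comp_abs_le (f : ℝ → ℝ≥0∞) (A : ℝ) :
    ∫⁻ t in Icc (-A) A, f |t| ≤ 2 * ∫⁻ t in Icc 0 A, f t := by
  have hneg : ∫⁻ t in Icc (-A) 0, f |t| = ∫⁻ t in Icc 0 A, f |t| := by
    simpa using (Measure.measurePreserving_neg volume).setLIntegral_comp_preimage_emb
      (Homeomorph.neg ℝ).measurableEmbedding (fun t ↦ f |t|) (Icc 0 A)
  have habs : ∫⁻ t in Icc 0 A, f |t| = ∫⁻ t in Icc 0 A, f t :=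
    setLIntegral_congr_fun measurableSet_Icc fun t ht ↦ by rw [abs_of_nonneg ht.1]
  calc ∫⁻ t in Icc (-A) A, f |t| ≤ ∫⁻ t in Icc (-A) 0 ∪ Icc 0 A, f |t| :=
        lintegral_mono_set fun t ht ↦ (le_total t 0).imp (⟨ht.1, ·⟩) (⟨·, ht.2⟩)
    _ ≤ (∫⁻ t in Icc (-A) 0, f |t|) + ∫⁻ t in Icc 0 A, f |t| := lintegral_union_le _ _ _
    _ = 2 * ∫⁻ t in Icc 0 A, f t := by rw [hneg, habs, two_mul]

theorem lintegral_Icc_zero_rpow {A γ : ℝ} (hA : 0 ≤ A) (hγ : 0 < γ) :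
    ∫⁻ t in Icc 0 A, ENNReal.ofReal (t ^ (γ - 1)) = ENNReal.ofReal (A ^ γ / γ) := by
  have hint : IntegrableOn (fun t : ℝ ↦ t ^ (γ - 1)) (Icc 0 A) :=
    (intervalIntegrable_iff_integrableOn_Icc_of_le hA).1
      (intervalIntegral.intervalIntegrable_rpow' (by linarith))
  rw [← ofReal_integral_eq_lintegral_ofReal hint
    ((ae_restrict_iff' measurableSet_Icc).2 (ae_of_all _ fun t ht ↦ Real.rpow_nonneg ht.1 _)),
    integral_Icc_eq_integral_Ioc, ← intervalIntegral.integral_of_le hA,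
    integral_rpow (Or.inl (by linarith))]
  simp [Real.zero_rpow hγ.ne']

theorem MeasureTheory.Measure.prod_apply_le_setLIntegral {α β : Type*} [MeasurableSpace α]
    [MeasurableSpace β] {μ : Measure α} {ν : Measure β} [SFinite ν] {s : Set (α × β)}
    (hs : MeasurableSet s) {V : Set α} (hV : MeasurableSet V) (hsV : ∀ p ∈ s, p.1 ∈ V)
    {f : α → ℝ≥0∞} (hf : ∀ᵐ a ∂μ, a ∈ V → ν (Prod.mk a ⁻¹' s) ≤ f a) :
    μ.prod ν s ≤ ∫⁻ a in V, f a ∂μ := by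
  rw [Measure.prod_apply hs, ← lintegral_indicator hV]
  refine lintegral_mono_ae (hf.mono fun a ha ↦ ?_)
  by_cases haV : a ∈ V
  · simpa [indicator_of_mem haV] using ha haV
  · have hempty : Prod.mk a ⁻¹' s = ∅ := eq_empty_of_forall_notMem fun b hb ↦ haV (hsV _ hb)
    simp [hempty]

theorem volume_abs_le_inter_abs_mul_sub_le {t : ℝ} (ht : t ≠ 0) (z A B : ℝ) :
    volume {y : ℝ | |y| ≤ B ∧ |t * y - z| ≤ A} ≤ ENNReal.ofReal (2 * min B (A / |t|)) := by
  have hdist : ∀ y, |y - z / t| = |t * y - z| / |t| := fun y ↦ by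
    rw [← abs_div, sub_div, mul_div_cancel_left₀ y ht]
  rw [mul_min_of_nonneg _ _ zero_le_two, ENNReal.ofReal_min, ← Real.volume_closedBall 0,
    ← Real.volume_closedBall (z / t)]
  refine le_min (measure_mono fun y hy ↦ ?_) (measure_mono fun y hy ↦ ?_)
  · simpa [Real.dist_eq] using hy.1
  · rw [Metric.mem_closedBall, Real.dist_eq, hdist]
    exact div_le_div_of_nonneg_right hy.2 (abs_nonneg t)

def twistedBox (A B : ℝ) : Set (ℝ × ℝ × ℝ) :=
  {x | |x.1| ≤ A ∧ |x.2.1| ≤ B ∧ |x.2.2| ≤ B ∧ |x.1 * x.2.1 - x.2.2| ≤ A}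

theorem measurableSet_twistedBox (A B : ℝ) : MeasurableSet (twistedBox A B) := by
  unfold twistedBox
  measurability

theorem volume_square_inter_strip_le {t : ℝ} (ht : t ≠ 0) (A B : ℝ) :
    volume {p : ℝ × ℝ | |p.1| ≤ B ∧ |p.2| ≤ B ∧ |t * p.1 - p.2| ≤ A}
      ≤ ENNReal.ofReal (2 * min B (A / |t|)) * ENNReal.ofReal (2 * B) := by
  set s := {p : ℝ × ℝ | |p.1| ≤ B ∧ |p.2| ≤ B ∧ |t * p.1 - p.2| ≤ A}
  have hs : MeasurableSet s := by measurability
  rw [Measure.volume_eq_prod, ← Measure.prod_swap, Measure.map_apply measurable_swap hs]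
  calc volume.prod volume (Prod.swap ⁻¹' s)
      ≤ ∫⁻ _ in Icc (-B) B, ENNReal.ofReal (2 * min B (A / |t|)) := by
        refine Measure.prod_apply_le_setLIntegral (measurable_swap hs) measurableSet_Icc
          (fun p hp ↦ abs_le.1 hp.2.1) (ae_of_all _ fun z _ ↦ ?_)
        refine (measure_mono ?_).trans (volume_abs_le_inter_abs_mul_sub_le ht z A B)
        exact fun y hy ↦ ⟨hy.1, hy.2.2⟩
    _ = ENNReal.ofReal (2 * min B (A / |t|)) * ENNReal.ofReal (2 * B) := by
        rw [setLIntegral_const, Real.volume_Icc, sub_neg_eq_add, ← two_mul]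

theorem volume_slice_twistedBox_le {A B γ : ℝ} (hA : 0 ≤ A) (hB : 0 ≤ B) (hγ₀ : 0 ≤ γ)
    (hγ₁ : γ ≤ 1) {t : ℝ} (ht : t ≠ 0) :
    volume (Prod.mk t ⁻¹' twistedBox A B)
      ≤ ENNReal.ofReal (4 * A ^ (1 - γ) * B ^ (1 + γ)) * ENNReal.ofReal (|t| ^ (γ - 1)) := by
  have hmin : min B (A / |t|) ≤ B ^ γ * (A ^ (1 - γ) * |t| ^ (γ - 1)) := by
    rw [show γ - 1 = -(1 - γ) by ring, Real.rpow_neg (abs_nonneg t), ← div_eq_mul_inv,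
      ← Real.div_rpow hA (abs_nonneg t)]
    exact Real.min_le_rpow_mul_rpow hB (by positivity) hγ₀ hγ₁
  calc volume (Prod.mk t ⁻¹' twistedBox A B)
      ≤ ENNReal.ofReal (2 * min B (A / |t|)) * ENNReal.ofReal (2 * B) :=
        (measure_mono fun p hp ↦ hp.2).trans (volume_square_inter_strip_le ht A B)
    _ ≤ ENNReal.ofReal (4 * A ^ (1 - γ) * B ^ (1 + γ)) * ENNReal.ofReal (|t| ^ (γ - 1)) := by
        rw [← ENNReal.ofReal_mul (by positivity), ← ENNReal.ofReal_mul (by positivity)]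
        refine ENNReal.ofReal_le_ofReal ?_
        rw [Real.rpow_add' hB (by linarith), Real.rpow_one]
        nlinarith

theorem volume_twistedBox_le {A B γ : ℝ} (hA : 0 ≤ A) (hB : 0 ≤ B) (hγ₀ : 0 < γ)
    (hγ₁ : γ ≤ 1) :
    volume (twistedBox A B) ≤ ENNReal.ofReal (8 / γ * A * B ^ (1 + γ)) := by
  set c := ENNReal.ofReal (4 * A ^ (1 - γ) * B ^ (1 + γ))
  have hslice : ∀ᵐ t : ℝ, t ∈ Icc (-A) A →
      volume (Prod.mk t ⁻¹' twistedBox A B) ≤ c * ENNReal.ofReal (|t| ^ (γ - 1)) :=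
    (Measure.ae_ne volume 0).mono fun t ht _ ↦
      volume_slice_twistedBox_le hA hB hγ₀.le hγ₁ ht
  calc volume (twistedBox A B)
      ≤ ∫⁻ t in Icc (-A) A, c * ENNReal.ofReal (|t| ^ (γ - 1)) := by
        rw [Measure.volume_eq_prod]
        exact Measure.prod_apply_le_setLIntegral (measurableSet_twistedBox A B)
          measurableSet_Icc (fun x hx ↦ abs_le.1 hx.1) hslice
    _ = c * ∫⁻ t in Icc (-A) A, ENNReal.ofReal (|t| ^ (γ - 1)) :=
        lintegral_const_mul' _ _ ENNReal.ofReal_ne_top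
    _ ≤ c * (2 * ENNReal.ofReal (A ^ γ / γ)) := by
        gcongr
        rw [← lintegral_Icc_zero_rpow hA hγ₀]
        exact lintegral_Icc_comp_abs_le (fun s ↦ ENNReal.ofReal (s ^ (γ - 1))) A
    _ = ENNReal.ofReal (8 / γ * A * B ^ (1 + γ)) := by
        rw [← ENNReal.ofReal_ofNat 2, ← ENNReal.ofReal_mul zero_le_two,
          ← ENNReal.ofReal_mul (by positivity)]
        congr 1
        have hAA : A ^ (1 - γ) * A ^ γ = A := by
          rw [← Real.rpow_add' hA (by norm_num), sub_add_cancel, Real.rpow_one]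
        field_simp
        linear_combination (8 * B ^ (1 + γ)) * hAA

theorem mem_twistedBox_sqrt {x : ℝ × ℝ × ℝ} {X₁ X₂ : ℝ}
    (h₁ : (x.1 * x.2.1 - x.2.2) ^ 2 + x.1 ^ 2 + 1 ≤ X₁) (h₂ : x.2.2 ^ 2 + x.2.1 ^ 2 + 1 ≤ X₂) :
    x ∈ twistedBox √X₁ √X₂ := by
  refine ⟨Real.abs_le_sqrt ?_, Real.abs_le_sqrt ?_, Real.abs_le_sqrt ?_, Real.abs_le_sqrt ?_⟩ <;>
    nlinarith [sq_nonneg x.1, sq_nonneg x.2.1, sq_nonneg x.2.2, sq_nonneg (x.1 * x.2.1 - x.2.2)]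

theorem stmt_10_general (ε c C : ℝ) (hε : 0 < ε) :
    ∃ K : ℝ, 0 < K ∧ ∀ Ξ₁ Ξ₂ : ℝ, 1 ≤ Ξ₁ → 1 ≤ Ξ₂ →
      MeasureTheory.volume {x : ℝ × ℝ × ℝ |
          c * Ξ₁ ≤ (x.1 * x.2.1 - x.2.2) ^ 2 + x.1 ^ 2 + 1 ∧
          (x.1 * x.2.1 - x.2.2) ^ 2 + x.1 ^ 2 + 1 ≤ C * Ξ₁ ∧
          c * Ξ₂ ≤ x.2.2 ^ 2 + x.2.1 ^ 2 + 1 ∧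
          x.2.2 ^ 2 + x.2.1 ^ 2 + 1 ≤ C * Ξ₂}
        ≤ ENNReal.ofReal (K * (Ξ₁ * Ξ₂) ^ ((1 : ℝ) / 2 + ε)) := by
  set γ := min ε 1
  set M := max C 1
  have hγ₀ : 0 < γ := lt_min hε one_pos
  have hM : 1 ≤ M := le_max_right C 1
  refine ⟨8 / γ * (M ^ 2) ^ ((1 : ℝ) / 2 + ε), by positivity, fun Ξ₁ Ξ₂ hΞ₁ hΞ₂ ↦ ?_⟩
  have hX₁ : 1 ≤ M * Ξ₁ := one_le_mul_of_one_le_of_one_le hM hΞ₁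
  have hX₂ : 1 ≤ M * Ξ₂ := one_le_mul_of_one_le_of_one_le hM hΞ₂
  have hCM : ∀ Ξ : ℝ, 1 ≤ Ξ → C * Ξ ≤ M * Ξ := fun Ξ hΞ ↦
    mul_le_mul_of_nonneg_right (le_max_left C 1) (by linarith)
  calc volume _ ≤ volume (twistedBox √(M * Ξ₁) √(M * Ξ₂)) := measure_mono fun x hx ↦
        mem_twistedBox_sqrt (hx.2.1.trans (hCM Ξ₁ hΞ₁)) (hx.2.2.2.trans (hCM Ξ₂ hΞ₂))
    _ ≤ ENNReal.ofReal (8 / γ * √(M * Ξ₁) * √(M * Ξ₂) ^ (1 + γ)) :=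
        volume_twistedBox_le (Real.sqrt_nonneg _) (Real.sqrt_nonneg _) hγ₀ (min_le_right ε 1)
    _ ≤ ENNReal.ofReal (8 / γ * (M * Ξ₁) ^ ((1 : ℝ) / 2 + ε) * (M * Ξ₂) ^ ((1 : ℝ) / 2 + ε)) := by
        refine ENNReal.ofReal_le_ofReal ?_
        gcongr
        · simpa using Real.sqrt_rpow_le_rpow (a := 1) hX₁ (by linarith)
        · exact Real.sqrt_rpow_le_rpow hX₂ (by linarith [min_le_left ε 1])
    _ = ENNReal.ofReal (8 / γ * (M ^ 2) ^ ((1 : ℝ) / 2 + ε) * (Ξ₁ * Ξ₂) ^ ((1 : ℝ) / 2 + ε)) := by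
        rw [mul_assoc, mul_assoc, ← Real.mul_rpow (by linarith) (by linarith),
          ← Real.mul_rpow (by positivity) (mul_nonneg (by linarith) (by linarith))]
        ring_nf

/-- the volume of the region where (x₁x₂−x₃)² + x₁² + 1 ≍ Ξ₁ and
x₃² + x₂² + 1 ≍ Ξ₂ is ≪_{ε,c,C} (Ξ₁Ξ₂)^{1/2+ε}. -/
theorem stmt_10 (ε c C : ℝ) (hε : 0 < ε) (hc : 0 < c) (hcC : c < C) :
    ∃ K : ℝ, 0 < K ∧ ∀ Ξ₁ Ξ₂ : ℝ, 1 ≤ Ξ₁ → 1 ≤ Ξ₂ →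
      MeasureTheory.volume {x : ℝ × ℝ × ℝ |
          c * Ξ₁ ≤ (x.1 * x.2.1 - x.2.2) ^ 2 + x.1 ^ 2 + 1 ∧
          (x.1 * x.2.1 - x.2.2) ^ 2 + x.1 ^ 2 + 1 ≤ C * Ξ₁ ∧
          c * Ξ₂ ≤ x.2.2 ^ 2 + x.2.1 ^ 2 + 1 ∧
          x.2.2 ^ 2 + x.2.1 ^ 2 + 1 ≤ C * Ξ₂}
        ≤ ENNReal.ofReal (K * (Ξ₁ * Ξ₂) ^ ((1 : ℝ) / 2 + ε)) :=
  stmt_10_general ε c C hε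
end

section
/- Let a, b, d, D₁, D₂ be positive integers with gcd(D₁D₂, ab) = 1, and define the normalized 6-fold Fourier transform Ŝ_{a,b,d}(x₁,…,z₂; D₁, D₂) of the GL(3) long-element Kloosterman sum as in the paper. If D₁ = t₁u₁ and D₂ = t₂u₂ with gcd(t₁t₂, u₁u₂) = 1, then Ŝ_{a,b,d}(x₁,x₂,y₁,y₂,z₁,z₂; t₁u₁, t₂u₂) = Ŝ_{a,b,d}(t̄₁x₁, t₂t̄₁x₂, t₁t̄₂y₁, t̄₂y₂, t̄₁z₁, t̄₂z₂; u₁, u₂) · Ŝ_{a,b,d}(ū₁x₁, u₂ū₁x₂, u₁ū₂y₁, ū₂y₂, ū₁z₁, ū₂z₂; t₁, t₂), where bars denote inverses modulo the complementary factors. -/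
/-- The normalized 6-fold Fourier transform Ŝ_{a,b,d} of a (level-1) GL(3)
long-element Kloosterman sum S. -/
noncomputable def Shat (S : ℤ → ℤ → ℤ → ℤ → ℕ → ℕ → ℂ) (a b d : ℤ)
    (x₁ x₂ y₁ y₂ z₁ z₂ : ℤ) (D₁ D₂ : ℕ) : ℂ :=
  (1 / ((D₁ : ℂ) ^ 3 * (D₂ : ℂ) ^ 3)) *
    ∑ n₁ ∈ Finset.range D₁, ∑ m₁ ∈ Finset.range D₁, ∑ l₁ ∈ Finset.range D₁,
      ∑ n₂ ∈ Finset.range D₂, ∑ m₂ ∈ Finset.range D₂, ∑ l₂ ∈ Finset.range D₂,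
        S (a * m₁ * d) (b * n₂ * l₂) ((n₁ : ℤ) * l₁) ((m₂ : ℤ) * d) D₁ D₂ *
          e2pi ((-(((n₁ : ℤ) * x₁ + (m₁ : ℤ) * y₁ + (l₁ : ℤ) * z₁) : ℤ) : ℝ) / (D₁ : ℝ)) *
          e2pi ((-(((n₂ : ℤ) * x₂ + (m₂ : ℤ) * y₂ + (l₂ : ℤ) * z₂) : ℤ) : ℝ) / (D₂ : ℝ))

open Finset

noncomputable def eMod (D : ℕ) (m : ℤ) : ℂ := e2pi ((m : ℝ) / D)

theorem e2pi_add (s t : ℝ) : e2pi (s + t) = e2pi s * e2pi t := by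
  rw [e2pi, e2pi, e2pi, ← Complex.exp_add]; congr 1; push_cast; ring

theorem e2pi_intCast (k : ℤ) : e2pi k = 1 := by
  rw [e2pi, ← Complex.exp_int_mul_two_pi_mul_I k]; congr 1; push_cast; ring

theorem eMod_congr {D : ℕ} {m m' : ℤ} (h : m ≡ m' [ZMOD D]) : eMod D m = eMod D m' := by
  rcases eq_or_ne D 0 with rfl | hD
  · simp only [Nat.cast_zero, Int.ModEq, Int.emod_zero] at h
    rw [h]
  obtain ⟨k, hk⟩ := h.dvd
  have : (m' : ℝ) / D = m / D + k := by
    rw [eq_add_of_sub_eq' hk]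
    push_cast
    field_simp
  rw [eMod, eMod, this, e2pi_add, e2pi_intCast, mul_one]

theorem eMod_mul_add {t u : ℕ} (ht : t ≠ 0) (hu : u ≠ 0) (A B : ℤ) :
    eMod (t * u) (u * A + t * B) = eMod t A * eMod u B := by
  rw [eMod, eMod, eMod, ← e2pi_add]
  congr 1
  push_cast
  field_simp

theorem eMod_neg_crt {t u : ℕ} (ht : t ≠ 0) (hu : u ≠ 0)
    (α₁ α₂ α₃ β₁ β₂ β₃ p₁ p₂ p₃ q₁ q₂ q₃ x y z : ℤ) :
    eMod (t * u) (-((u * α₁ * p₁ + t * β₁ * q₁) * x + (u * α₂ * p₂ + t * β₂ * q₂) * y +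
        (u * α₃ * p₃ + t * β₃ * q₃) * z)) =
      eMod t (-(p₁ * (α₁ * x) + p₂ * (α₂ * y) + p₃ * (α₃ * z))) *
        eMod u (-(q₁ * (β₁ * x) + q₂ * (β₂ * y) + q₃ * (β₃ * z))) := by
  rw [← eMod_mul_add ht hu]
  congr 1
  ring

theorem val_intCast_modEq {n : ℕ} [NeZero n] (x : ℤ) : ((x : ZMod n).val : ℤ) ≡ x [ZMOD n] := by
  rw [ZMod.val_intCast]
  exact Int.mod_modEq x n

theorem intCast_mul_eq_one_of_modEq {m n : ℕ} (hmn : m ∣ n) {x y : ℤ} (h : x * y ≡ 1 [ZMOD n]) :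
    (x : ZMod m) * y = 1 := by
  exact_mod_cast (ZMod.intCast_eq_intCast_iff _ _ m).mpr
    (h.of_dvd (Int.natCast_dvd_natCast.mpr hmn))

theorem isUnit_intCast_of_mul_modEq_one {m n : ℕ} (hmn : m ∣ n) {x y : ℤ}
    (h : x * y ≡ 1 [ZMOD n]) : IsUnit (x : ZMod m) ∧ IsUnit (y : ZMod m) :=
  have hxy := intCast_mul_eq_one_of_modEq hmn h
  ⟨.of_mul_eq_one _ hxy, .of_mul_eq_one_right _ hxy⟩

theorem sum_range_mul_eq_sum_sum_crt {M : Type*} [AddCommMonoid M] {t u : ℕ} [NeZero t] [NeZero u]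
    (htu : t.Coprime u) {α β : ℤ} (hα : IsUnit (α : ZMod t)) (hβ : IsUnit (β : ZMod u))
    (g : ℕ → M) :
    ∑ n ∈ range (t * u), g n =
      ∑ p ∈ range t, ∑ q ∈ range u, g (((u * α * p + t * β * q : ℤ) : ZMod (t * u)).val) := by
  set φ : ℕ × ℕ → ℕ := fun pq => ((u * α * pq.1 + t * β * pq.2 : ℤ) : ZMod (t * u)).val
  have hφ : ∀ pq ∈ range t ×ˢ range u, φ pq ∈ range (t * u) :=
    fun _ _ => mem_range.mpr (ZMod.val_lt _)
  have hinj : Set.InjOn φ (range t ×ˢ range u : Finset (ℕ × ℕ)) := by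
    rintro ⟨p, q⟩ hpq ⟨p', q'⟩ hpq' h
    simp only [coe_product, Set.mem_prod, mem_coe, mem_range] at hpq hpq'
    have h := (ZMod.intCast_eq_intCast_iff _ _ _).mp (ZMod.val_injective _ h)
    have ht := (ZMod.intCast_eq_intCast_iff _ _ t).mpr (h.of_mul_right u)
    have hu := (ZMod.intCast_eq_intCast_iff _ _ u).mpr (h.of_mul_left t)
    push_cast [ZMod.natCast_self, zero_mul, add_zero, zero_add] at ht hu
    have hu' : IsUnit (u * α : ZMod t) := ((ZMod.isUnit_iff_coprime u t).mpr htu.symm).mul hα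
    have ht' : IsUnit (t * β : ZMod u) := ((ZMod.isUnit_iff_coprime t u).mpr htu).mul hβ
    have hp := congrArg ZMod.val (hu'.mul_left_cancel ht)
    have hq := congrArg ZMod.val (ht'.mul_left_cancel hu)
    rw [ZMod.val_natCast_of_lt hpq.1, ZMod.val_natCast_of_lt hpq'.1] at hp
    rw [ZMod.val_natCast_of_lt hpq.2, ZMod.val_natCast_of_lt hpq'.2] at hq
    rw [hp, hq]
  rw [← sum_product']
  refine (sum_nbij φ hφ hinj ?_ fun _ _ => rfl).symm
  exact surjOn_of_injOn_of_card_le _ hφ hinj (by simp)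

section SixFold

variable {M : Type*}

def sum6 [AddCommMonoid M] (D₁ D₂ : ℕ) (F : ℤ → ℤ → ℤ → ℤ → ℤ → ℤ → M) : M :=
  ∑ n₁ ∈ range D₁, ∑ m₁ ∈ range D₁, ∑ l₁ ∈ range D₁,
    ∑ n₂ ∈ range D₂, ∑ m₂ ∈ range D₂, ∑ l₂ ∈ range D₂, F n₁ m₁ l₁ n₂ m₂ l₂

def RespectsModEq (D₁ D₂ : ℕ) (F : ℤ → ℤ → ℤ → ℤ → ℤ → ℤ → M) : Prop :=
  ∀ ⦃n₁ m₁ l₁ n₂ m₂ l₂ n₁' m₁' l₁' n₂' m₂' l₂' : ℤ⦄,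
    n₁ ≡ n₁' [ZMOD D₁] → m₁ ≡ m₁' [ZMOD D₁] → l₁ ≡ l₁' [ZMOD D₁] →
    n₂ ≡ n₂' [ZMOD D₂] → m₂ ≡ m₂' [ZMOD D₂] → l₂ ≡ l₂' [ZMOD D₂] →
    F n₁ m₁ l₁ n₂ m₂ l₂ = F n₁' m₁' l₁' n₂' m₂' l₂'

theorem sum6_mul_eq_sum6_mul_sum6 [CommSemiring M] {t₁ u₁ t₂ u₂ : ℕ}
    [NeZero t₁] [NeZero u₁] [NeZero t₂] [NeZero u₂] (h₁ : t₁.Coprime u₁) (h₂ : t₂.Coprime u₂)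
    {α₁ α₂ α₃ α₄ α₅ α₆ β₁ β₂ β₃ β₄ β₅ β₆ : ℤ}
    (hα₁ : IsUnit (α₁ : ZMod t₁)) (hα₂ : IsUnit (α₂ : ZMod t₁)) (hα₃ : IsUnit (α₃ : ZMod t₁))
    (hα₄ : IsUnit (α₄ : ZMod t₂)) (hα₅ : IsUnit (α₅ : ZMod t₂)) (hα₆ : IsUnit (α₆ : ZMod t₂))
    (hβ₁ : IsUnit (β₁ : ZMod u₁)) (hβ₂ : IsUnit (β₂ : ZMod u₁)) (hβ₃ : IsUnit (β₃ : ZMod u₁))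
    (hβ₄ : IsUnit (β₄ : ZMod u₂)) (hβ₅ : IsUnit (β₅ : ZMod u₂)) (hβ₆ : IsUnit (β₆ : ZMod u₂))
    {F G H : ℤ → ℤ → ℤ → ℤ → ℤ → ℤ → M} (hF : RespectsModEq (t₁ * u₁) (t₂ * u₂) F)
    (hFGH : ∀ p₁ p₂ p₃ p₄ p₅ p₆ q₁ q₂ q₃ q₄ q₅ q₆ : ℤ,
      F (u₁ * α₁ * p₁ + t₁ * β₁ * q₁) (u₁ * α₂ * p₂ + t₁ * β₂ * q₂) (u₁ * α₃ * p₃ + t₁ * β₃ * q₃)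
        (u₂ * α₄ * p₄ + t₂ * β₄ * q₄) (u₂ * α₅ * p₅ + t₂ * β₅ * q₅) (u₂ * α₆ * p₆ + t₂ * β₆ * q₆) =
      G p₁ p₂ p₃ p₄ p₅ p₆ * H q₁ q₂ q₃ q₄ q₅ q₆) :
    sum6 (t₁ * u₁) (t₂ * u₂) F = sum6 t₁ t₂ G * sum6 u₁ u₂ H := by
  simp only [sum6, sum_mul_sum]
  rw [sum_range_mul_eq_sum_sum_crt h₁ hα₁ hβ₁]
  refine sum_congr rfl fun p₁ _ => sum_congr rfl fun q₁ _ => ?_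
  rw [sum_range_mul_eq_sum_sum_crt h₁ hα₂ hβ₂]
  refine sum_congr rfl fun p₂ _ => sum_congr rfl fun q₂ _ => ?_
  rw [sum_range_mul_eq_sum_sum_crt h₁ hα₃ hβ₃]
  refine sum_congr rfl fun p₃ _ => sum_congr rfl fun q₃ _ => ?_
  rw [sum_range_mul_eq_sum_sum_crt h₂ hα₄ hβ₄]
  refine sum_congr rfl fun p₄ _ => sum_congr rfl fun q₄ _ => ?_
  rw [sum_range_mul_eq_sum_sum_crt h₂ hα₅ hβ₅]
  refine sum_congr rfl fun p₅ _ => sum_congr rfl fun q₅ _ => ?_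
  rw [sum_range_mul_eq_sum_sum_crt h₂ hα₆ hβ₆]
  refine sum_congr rfl fun p₆ _ => sum_congr rfl fun q₆ _ => ?_
  rw [← hFGH]
  exact hF (val_intCast_modEq _) (val_intCast_modEq _) (val_intCast_modEq _)
    (val_intCast_modEq _) (val_intCast_modEq _) (val_intCast_modEq _)

end SixFold

def KloostermanPeriodic (S : ℤ → ℤ → ℤ → ℤ → ℕ → ℕ → ℂ) : Prop :=
  ∀ (m₁ m₁' m₂ m₂' n₁ n₁' n₂ n₂' : ℤ) (D₁ D₂ : ℕ),
    m₁ ≡ m₁' [ZMOD (D₁ : ℤ)] → n₁ ≡ n₁' [ZMOD (D₁ : ℤ)] →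
    m₂ ≡ m₂' [ZMOD (D₂ : ℤ)] → n₂ ≡ n₂' [ZMOD (D₂ : ℤ)] →
    S m₁ m₂ n₁ n₂ D₁ D₂ = S m₁' m₂' n₁' n₂' D₁ D₂

def KloostermanTwistedMultiplicative (S : ℤ → ℤ → ℤ → ℤ → ℕ → ℕ → ℂ) : Prop :=
  ∀ (m₁ m₂ n₁ n₂ : ℤ) (t₁ t₂ u₁ u₂ : ℕ) (tb₁ tb₂ ub₁ ub₂ : ℤ),
    Nat.Coprime (t₁ * t₂) (u₁ * u₂) →
    (t₁ : ℤ) * tb₁ ≡ 1 [ZMOD ((u₁ * u₂ : ℕ) : ℤ)] →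
    (t₂ : ℤ) * tb₂ ≡ 1 [ZMOD ((u₁ * u₂ : ℕ) : ℤ)] →
    (u₁ : ℤ) * ub₁ ≡ 1 [ZMOD ((t₁ * t₂ : ℕ) : ℤ)] →
    (u₂ : ℤ) * ub₂ ≡ 1 [ZMOD ((t₁ * t₂ : ℕ) : ℤ)] →
    S m₁ m₂ n₁ n₂ (t₁ * u₁) (t₂ * u₂) =
      S (ub₁ ^ 2 * u₂ * m₁) (ub₂ ^ 2 * u₁ * m₂) n₁ n₂ t₁ t₂ *
        S (tb₁ ^ 2 * t₂ * m₁) (tb₂ ^ 2 * t₁ * m₂) n₁ n₂ u₁ u₂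

noncomputable def shatTerm (S : ℤ → ℤ → ℤ → ℤ → ℕ → ℕ → ℂ) (a b d x₁ x₂ y₁ y₂ z₁ z₂ : ℤ) (D₁ D₂ : ℕ)
    (n₁ m₁ l₁ n₂ m₂ l₂ : ℤ) : ℂ :=
  S (a * m₁ * d) (b * n₂ * l₂) (n₁ * l₁) (m₂ * d) D₁ D₂ *
    eMod D₁ (-(n₁ * x₁ + m₁ * y₁ + l₁ * z₁)) * eMod D₂ (-(n₂ * x₂ + m₂ * y₂ + l₂ * z₂))

section Kloosterman

variable {S : ℤ → ℤ → ℤ → ℤ → ℕ → ℕ → ℂ}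

theorem Shat_eq_sum6 (a b d x₁ x₂ y₁ y₂ z₁ z₂ : ℤ) (D₁ D₂ : ℕ) :
    Shat S a b d x₁ x₂ y₁ y₂ z₁ z₂ D₁ D₂ =
      1 / ((D₁ : ℂ) ^ 3 * (D₂ : ℂ) ^ 3) *
        sum6 D₁ D₂ (shatTerm S a b d x₁ x₂ y₁ y₂ z₁ z₂ D₁ D₂) := by
  simp only [Shat, sum6, shatTerm, eMod, Int.cast_neg]

theorem shatTerm_respectsModEq (hper : KloostermanPeriodic S) (a b d x₁ x₂ y₁ y₂ z₁ z₂ : ℤ)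
    (D₁ D₂ : ℕ) : RespectsModEq D₁ D₂ (shatTerm S a b d x₁ x₂ y₁ y₂ z₁ z₂ D₁ D₂) := by
  intro n₁ m₁ l₁ n₂ m₂ l₂ n₁' m₁' l₁' n₂' m₂' l₂' hn₁ hm₁ hl₁ hn₂ hm₂ hl₂
  rw [shatTerm, shatTerm, hper _ _ _ _ _ _ _ _ D₁ D₂ ((hm₁.mul_left a).mul_right d) (hn₁.mul hl₁)
      ((hn₂.mul_left b).mul hl₂) (hm₂.mul_right d),
    eMod_congr (((hn₁.mul_right x₁).add (hm₁.mul_right y₁)).add (hl₁.mul_right z₁)).neg,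
    eMod_congr (((hn₂.mul_right x₂).add (hm₂.mul_right y₂)).add (hl₂.mul_right z₂)).neg]

theorem kloosterman_crt
    (hper : KloostermanPeriodic S) (hmult : KloostermanTwistedMultiplicative S)
    {t₁ t₂ u₁ u₂ : ℕ} (hcop : Nat.Coprime (t₁ * t₂) (u₁ * u₂)) {tb₁ tb₂ ub₁ ub₂ : ℤ}
    (htb₁ : (t₁ : ℤ) * tb₁ ≡ 1 [ZMOD ((u₁ * u₂ : ℕ) : ℤ)])
    (htb₂ : (t₂ : ℤ) * tb₂ ≡ 1 [ZMOD ((u₁ * u₂ : ℕ) : ℤ)])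
    (hub₁ : (u₁ : ℤ) * ub₁ ≡ 1 [ZMOD ((t₁ * t₂ : ℕ) : ℤ)])
    (hub₂ : (u₂ : ℤ) * ub₂ ≡ 1 [ZMOD ((t₁ * t₂ : ℕ) : ℤ)])
    (a b d p₁ p₂ p₃ p₄ p₅ p₆ q₁ q₂ q₃ q₄ q₅ q₆ : ℤ) :
    S (a * (u₁ * (u₁ * ub₂) * p₂ + t₁ * (t₁ * tb₂) * q₂) * d)
        (b * (u₂ * (u₂ * ub₁) * p₄ + t₂ * (t₂ * tb₁) * q₄) * (u₂ * ub₂ * p₆ + t₂ * tb₂ * q₆))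
        ((u₁ * ub₁ * p₁ + t₁ * tb₁ * q₁) * (u₁ * ub₁ * p₃ + t₁ * tb₁ * q₃))
        ((u₂ * ub₂ * p₅ + t₂ * tb₂ * q₅) * d) (t₁ * u₁) (t₂ * u₂) =
      S (a * p₂ * d) (b * p₄ * p₆) (p₁ * p₃) (p₅ * d) t₁ t₂ *
        S (a * q₂ * d) (b * q₄ * q₆) (q₁ * q₃) (q₅ * d) u₁ u₂ := by
  have A₁ := intCast_mul_eq_one_of_modEq (dvd_mul_right t₁ t₂) hub₁
  have A₂ := intCast_mul_eq_one_of_modEq (dvd_mul_right t₁ t₂) hub₂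
  have B₁ := intCast_mul_eq_one_of_modEq (dvd_mul_left t₂ t₁) hub₁
  have B₂ := intCast_mul_eq_one_of_modEq (dvd_mul_left t₂ t₁) hub₂
  have C₁ := intCast_mul_eq_one_of_modEq (dvd_mul_right u₁ u₂) htb₁
  have C₂ := intCast_mul_eq_one_of_modEq (dvd_mul_right u₁ u₂) htb₂
  have D₁ := intCast_mul_eq_one_of_modEq (dvd_mul_left u₂ u₁) htb₁
  have D₂ := intCast_mul_eq_one_of_modEq (dvd_mul_left u₂ u₁) htb₂
  push_cast at A₁ A₂ B₁ B₂ C₁ C₂ D₁ D₂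
  rw [hmult _ _ _ _ t₁ t₂ u₁ u₂ tb₁ tb₂ ub₁ ub₂ hcop htb₁ htb₂ hub₁ hub₂]
  congr 1 <;> apply hper <;> rw [← ZMod.intCast_eq_intCast_iff] <;> push_cast [ZMod.natCast_self]
  -- each goal reads `(u₁ * ub₁) ^ i * (u₂ * ub₂) ^ j * r = r`, or the same with `t`, `tb`
  · linear_combination a * p₂ * d * (u₁ * ub₁ + 1) * (u₂ * ub₂) * A₁ + a * p₂ * d * A₂
  · linear_combination p₁ * p₃ * (u₁ * ub₁ + 1) * A₁
  · linear_combination b * p₄ * p₆ * (u₂ * ub₂) ^ 3 * B₁ +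
      b * p₄ * p₆ * ((u₂ * ub₂) ^ 2 + u₂ * ub₂ + 1) * B₂
  · linear_combination p₅ * d * B₂
  · linear_combination a * q₂ * d * (t₁ * tb₁ + 1) * (t₂ * tb₂) * C₁ + a * q₂ * d * C₂
  · linear_combination q₁ * q₃ * (t₁ * tb₁ + 1) * C₁
  · linear_combination b * q₄ * q₆ * (t₂ * tb₂) ^ 3 * D₁ +
      b * q₄ * q₆ * ((t₂ * tb₂) ^ 2 + t₂ * tb₂ + 1) * D₂
  · linear_combination q₅ * d * D₂

theorem shatTerm_crt (hper : KloostermanPeriodic S) (hmult : KloostermanTwistedMultiplicative S)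
    {t₁ t₂ u₁ u₂ : ℕ} [NeZero t₁] [NeZero t₂] [NeZero u₁] [NeZero u₂]
    (hcop : Nat.Coprime (t₁ * t₂) (u₁ * u₂)) {tb₁ tb₂ ub₁ ub₂ : ℤ}
    (htb₁ : (t₁ : ℤ) * tb₁ ≡ 1 [ZMOD ((u₁ * u₂ : ℕ) : ℤ)])
    (htb₂ : (t₂ : ℤ) * tb₂ ≡ 1 [ZMOD ((u₁ * u₂ : ℕ) : ℤ)])
    (hub₁ : (u₁ : ℤ) * ub₁ ≡ 1 [ZMOD ((t₁ * t₂ : ℕ) : ℤ)])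
    (hub₂ : (u₂ : ℤ) * ub₂ ≡ 1 [ZMOD ((t₁ * t₂ : ℕ) : ℤ)])
    (a b d x₁ x₂ y₁ y₂ z₁ z₂ p₁ p₂ p₃ p₄ p₅ p₆ q₁ q₂ q₃ q₄ q₅ q₆ : ℤ) :
    shatTerm S a b d x₁ x₂ y₁ y₂ z₁ z₂ (t₁ * u₁) (t₂ * u₂)
        (u₁ * ub₁ * p₁ + t₁ * tb₁ * q₁) (u₁ * (u₁ * ub₂) * p₂ + t₁ * (t₁ * tb₂) * q₂)
        (u₁ * ub₁ * p₃ + t₁ * tb₁ * q₃) (u₂ * (u₂ * ub₁) * p₄ + t₂ * (t₂ * tb₁) * q₄)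
        (u₂ * ub₂ * p₅ + t₂ * tb₂ * q₅) (u₂ * ub₂ * p₆ + t₂ * tb₂ * q₆) =
      shatTerm S a b d (ub₁ * x₁) (u₂ * ub₁ * x₂) (u₁ * ub₂ * y₁) (ub₂ * y₂) (ub₁ * z₁) (ub₂ * z₂)
          t₁ t₂ p₁ p₂ p₃ p₄ p₅ p₆ *
        shatTerm S a b d (tb₁ * x₁) (t₂ * tb₁ * x₂) (t₁ * tb₂ * y₁) (tb₂ * y₂) (tb₁ * z₁)
          (tb₂ * z₂) u₁ u₂ q₁ q₂ q₃ q₄ q₅ q₆ := by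
  rw [shatTerm, shatTerm, shatTerm,
    kloosterman_crt hper hmult hcop htb₁ htb₂ hub₁ hub₂,
    eMod_neg_crt (NeZero.ne t₁) (NeZero.ne u₁), eMod_neg_crt (NeZero.ne t₂) (NeZero.ne u₂)]
  ring

theorem sum6_shatTerm_crt (hper : KloostermanPeriodic S)
    (hmult : KloostermanTwistedMultiplicative S)
    {t₁ t₂ u₁ u₂ : ℕ} [NeZero t₁] [NeZero t₂] [NeZero u₁] [NeZero u₂]
    (hcop : Nat.Coprime (t₁ * t₂) (u₁ * u₂)) {tb₁ tb₂ ub₁ ub₂ : ℤ}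
    (htb₁ : (t₁ : ℤ) * tb₁ ≡ 1 [ZMOD ((u₁ * u₂ : ℕ) : ℤ)])
    (htb₂ : (t₂ : ℤ) * tb₂ ≡ 1 [ZMOD ((u₁ * u₂ : ℕ) : ℤ)])
    (hub₁ : (u₁ : ℤ) * ub₁ ≡ 1 [ZMOD ((t₁ * t₂ : ℕ) : ℤ)])
    (hub₂ : (u₂ : ℤ) * ub₂ ≡ 1 [ZMOD ((t₁ * t₂ : ℕ) : ℤ)]) (a b d x₁ x₂ y₁ y₂ z₁ z₂ : ℤ) :
    sum6 (t₁ * u₁) (t₂ * u₂) (shatTerm S a b d x₁ x₂ y₁ y₂ z₁ z₂ (t₁ * u₁) (t₂ * u₂)) =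
      sum6 t₁ t₂ (shatTerm S a b d (ub₁ * x₁) (u₂ * ub₁ * x₂) (u₁ * ub₂ * y₁) (ub₂ * y₂)
          (ub₁ * z₁) (ub₂ * z₂) t₁ t₂) *
        sum6 u₁ u₂ (shatTerm S a b d (tb₁ * x₁) (t₂ * tb₁ * x₂) (t₁ * tb₂ * y₁) (tb₂ * y₂)
          (tb₁ * z₁) (tb₂ * z₂) u₁ u₂) := by
  obtain ⟨hu₁t₁, hub₁t₁⟩ := isUnit_intCast_of_mul_modEq_one (dvd_mul_right t₁ t₂) hub₁
  obtain ⟨hu₁t₂, hub₁t₂⟩ := isUnit_intCast_of_mul_modEq_one (dvd_mul_left t₂ t₁) hub₁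
  obtain ⟨hu₂t₁, hub₂t₁⟩ := isUnit_intCast_of_mul_modEq_one (dvd_mul_right t₁ t₂) hub₂
  obtain ⟨hu₂t₂, hub₂t₂⟩ := isUnit_intCast_of_mul_modEq_one (dvd_mul_left t₂ t₁) hub₂
  obtain ⟨ht₁u₁, htb₁u₁⟩ := isUnit_intCast_of_mul_modEq_one (dvd_mul_right u₁ u₂) htb₁
  obtain ⟨ht₁u₂, htb₁u₂⟩ := isUnit_intCast_of_mul_modEq_one (dvd_mul_left u₂ u₁) htb₁
  obtain ⟨ht₂u₁, htb₂u₁⟩ := isUnit_intCast_of_mul_modEq_one (dvd_mul_right u₁ u₂) htb₂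
  obtain ⟨ht₂u₂, htb₂u₂⟩ := isUnit_intCast_of_mul_modEq_one (dvd_mul_left u₂ u₁) htb₂
  refine sum6_mul_eq_sum6_mul_sum6 hcop.coprime_mul_right.coprime_mul_right_right
    hcop.coprime_mul_left.coprime_mul_left_right hub₁t₁
    (by rw [Int.cast_mul]; exact hu₁t₁.mul hub₂t₁) hub₁t₁
    (by rw [Int.cast_mul]; exact hu₂t₂.mul hub₁t₂) hub₂t₂ hub₂t₂ htb₁u₁
    (by rw [Int.cast_mul]; exact ht₁u₁.mul htb₂u₁) htb₁u₁
    (by rw [Int.cast_mul]; exact ht₂u₂.mul htb₁u₂) htb₂u₂ htb₂u₂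
    (shatTerm_respectsModEq hper ..)
    (shatTerm_crt hper hmult hcop htb₁ htb₂ hub₁ hub₂ a b d x₁ x₂ y₁ y₂ z₁ z₂)

end Kloosterman

theorem stmt_15_general (S : ℤ → ℤ → ℤ → ℤ → ℕ → ℕ → ℂ)
    (hper : ∀ (m₁ m₁' m₂ m₂' n₁ n₁' n₂ n₂' : ℤ) (D₁ D₂ : ℕ),
      m₁ ≡ m₁' [ZMOD (D₁ : ℤ)] → n₁ ≡ n₁' [ZMOD (D₁ : ℤ)] →
      m₂ ≡ m₂' [ZMOD (D₂ : ℤ)] → n₂ ≡ n₂' [ZMOD (D₂ : ℤ)] →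
      S m₁ m₂ n₁ n₂ D₁ D₂ = S m₁' m₂' n₁' n₂' D₁ D₂)
    (hmult : ∀ (m₁ m₂ n₁ n₂ : ℤ) (t₁ t₂ u₁ u₂ : ℕ) (tb₁ tb₂ ub₁ ub₂ : ℤ),
      Nat.Coprime (t₁ * t₂) (u₁ * u₂) →
      (t₁ : ℤ) * tb₁ ≡ 1 [ZMOD ((u₁ * u₂ : ℕ) : ℤ)] →
      (t₂ : ℤ) * tb₂ ≡ 1 [ZMOD ((u₁ * u₂ : ℕ) : ℤ)] →
      (u₁ : ℤ) * ub₁ ≡ 1 [ZMOD ((t₁ * t₂ : ℕ) : ℤ)] →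
      (u₂ : ℤ) * ub₂ ≡ 1 [ZMOD ((t₁ * t₂ : ℕ) : ℤ)] →
      S m₁ m₂ n₁ n₂ (t₁ * u₁) (t₂ * u₂) =
        S (ub₁ ^ 2 * u₂ * m₁) (ub₂ ^ 2 * u₁ * m₂) n₁ n₂ t₁ t₂ *
          S (tb₁ ^ 2 * t₂ * m₁) (tb₂ ^ 2 * t₁ * m₂) n₁ n₂ u₁ u₂)
    (a b d : ℤ)
    (t₁ t₂ u₁ u₂ : ℕ) (ht₁ : 0 < t₁) (ht₂ : 0 < t₂) (hu₁ : 0 < u₁) (hu₂ : 0 < u₂)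
    (hcop : Nat.Coprime (t₁ * t₂) (u₁ * u₂))
    (x₁ x₂ y₁ y₂ z₁ z₂ : ℤ) (tb₁ tb₂ ub₁ ub₂ : ℤ)
    (htb₁ : (t₁ : ℤ) * tb₁ ≡ 1 [ZMOD ((u₁ * u₂ : ℕ) : ℤ)])
    (htb₂ : (t₂ : ℤ) * tb₂ ≡ 1 [ZMOD ((u₁ * u₂ : ℕ) : ℤ)])
    (hub₁ : (u₁ : ℤ) * ub₁ ≡ 1 [ZMOD ((t₁ * t₂ : ℕ) : ℤ)])
    (hub₂ : (u₂ : ℤ) * ub₂ ≡ 1 [ZMOD ((t₁ * t₂ : ℕ) : ℤ)]) :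
    Shat S a b d x₁ x₂ y₁ y₂ z₁ z₂ (t₁ * u₁) (t₂ * u₂) =
      Shat S a b d (tb₁ * x₁) (t₂ * tb₁ * x₂) (t₁ * tb₂ * y₁) (tb₂ * y₂)
          (tb₁ * z₁) (tb₂ * z₂) u₁ u₂ *
        Shat S a b d (ub₁ * x₁) (u₂ * ub₁ * x₂) (u₁ * ub₂ * y₁) (ub₂ * y₂)
          (ub₁ * z₁) (ub₂ * z₂) t₁ t₂ := by
  have : NeZero t₁ := ⟨ht₁.ne'⟩
  have : NeZero t₂ := ⟨ht₂.ne'⟩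
  have : NeZero u₁ := ⟨hu₁.ne'⟩
  have : NeZero u₂ := ⟨hu₂.ne'⟩
  rw [Shat_eq_sum6, Shat_eq_sum6, Shat_eq_sum6,
    sum6_shatTerm_crt hper hmult hcop htb₁ htb₂ hub₁ hub₂]
  push_cast
  ring

/-- twisted multiplicativity of the transform Ŝ_{a,b,d}: if S is
periodic in its arguments (mod the respective moduli) and satisfies the twisted
multiplicativity of GL(3) long-element Kloosterman sums, then Ŝ factors along a
coprime factorization D₁ = t₁u₁, D₂ = t₂u₂, with arguments twisted by modular
inverses. -/
theorem stmt_15 (S : ℤ → ℤ → ℤ → ℤ → ℕ → ℕ → ℂ)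
    (hper : ∀ (m₁ m₁' m₂ m₂' n₁ n₁' n₂ n₂' : ℤ) (D₁ D₂ : ℕ),
      m₁ ≡ m₁' [ZMOD (D₁ : ℤ)] → n₁ ≡ n₁' [ZMOD (D₁ : ℤ)] →
      m₂ ≡ m₂' [ZMOD (D₂ : ℤ)] → n₂ ≡ n₂' [ZMOD (D₂ : ℤ)] →
      S m₁ m₂ n₁ n₂ D₁ D₂ = S m₁' m₂' n₁' n₂' D₁ D₂)
    (hmult : ∀ (m₁ m₂ n₁ n₂ : ℤ) (t₁ t₂ u₁ u₂ : ℕ) (tb₁ tb₂ ub₁ ub₂ : ℤ),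
      Nat.Coprime (t₁ * t₂) (u₁ * u₂) →
      (t₁ : ℤ) * tb₁ ≡ 1 [ZMOD ((u₁ * u₂ : ℕ) : ℤ)] →
      (t₂ : ℤ) * tb₂ ≡ 1 [ZMOD ((u₁ * u₂ : ℕ) : ℤ)] →
      (u₁ : ℤ) * ub₁ ≡ 1 [ZMOD ((t₁ * t₂ : ℕ) : ℤ)] →
      (u₂ : ℤ) * ub₂ ≡ 1 [ZMOD ((t₁ * t₂ : ℕ) : ℤ)] →
      S m₁ m₂ n₁ n₂ (t₁ * u₁) (t₂ * u₂) =
        S (ub₁ ^ 2 * u₂ * m₁) (ub₂ ^ 2 * u₁ * m₂) n₁ n₂ t₁ t₂ *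
          S (tb₁ ^ 2 * t₂ * m₁) (tb₂ ^ 2 * t₁ * m₂) n₁ n₂ u₁ u₂)
    (a b d : ℤ) (ha : 0 < a) (hb : 0 < b) (hd : 0 < d)
    (t₁ t₂ u₁ u₂ : ℕ) (ht₁ : 0 < t₁) (ht₂ : 0 < t₂) (hu₁ : 0 < u₁) (hu₂ : 0 < u₂)
    (hcop : Nat.Coprime (t₁ * t₂) (u₁ * u₂))
    (hab : Int.gcd (((t₁ * u₁) * (t₂ * u₂) : ℕ) : ℤ) (a * b) = 1)
    (x₁ x₂ y₁ y₂ z₁ z₂ : ℤ) (tb₁ tb₂ ub₁ ub₂ : ℤ)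
    (htb₁ : (t₁ : ℤ) * tb₁ ≡ 1 [ZMOD ((u₁ * u₂ : ℕ) : ℤ)])
    (htb₂ : (t₂ : ℤ) * tb₂ ≡ 1 [ZMOD ((u₁ * u₂ : ℕ) : ℤ)])
    (hub₁ : (u₁ : ℤ) * ub₁ ≡ 1 [ZMOD ((t₁ * t₂ : ℕ) : ℤ)])
    (hub₂ : (u₂ : ℤ) * ub₂ ≡ 1 [ZMOD ((t₁ * t₂ : ℕ) : ℤ)]) :
    Shat S a b d x₁ x₂ y₁ y₂ z₁ z₂ (t₁ * u₁) (t₂ * u₂) =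
      Shat S a b d (tb₁ * x₁) (t₂ * tb₁ * x₂) (t₁ * tb₂ * y₁) (tb₂ * y₂)
          (tb₁ * z₁) (tb₂ * z₂) u₁ u₂ *
        Shat S a b d (ub₁ * x₁) (u₂ * ub₁ * x₂) (u₁ * ub₂ * y₁) (ub₂ * y₂)
          (ub₁ * z₁) (ub₂ * z₂) t₁ t₂ :=
  stmt_15_general S hper hmult a b d t₁ t₂ u₁ u₂ ht₁ ht₂ hu₁ hu₂ hcop x₁ x₂ y₁ y₂ z₁ z₂ tb₁ tb₂ ub₁
    ub₂ htb₁ htb₂ hub₁ hub₂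
end

section
/- Let N ∈ ℕ, δ > 0, p a prime not dividing N, and π a cuspidal automorphic representation with Hecke eigenvalues λ_π(p^l) = A_ϖ(p^l, 1). Assume the mean value bound Σ_{π, μ_π ∈ Ω} |A_ϖ(p^l,1)|^{2k} ≤ C(ε)(Np^{2lk})^ε ((l+1)(l+2)/2)^{2k} (N² + N^{1/2}p^{2kl})^{1/2} N^{1/2}·N^{1/2} for all k ≥ 1 (derived from the Hecke relations and the spectral second moment bound), and that ‖α_π(p)‖ ≥ 1+δ implies λ_π(p^l) ≥ (l+1)(l+2) for some l = l(δ). Then with k = ⌊3 log N/(4l log p)⌋ ≥ 1, the count #{π : μ_π ∈ Ω, ‖α_π(p)‖ ≥ 1+δ} ≪ N^{2+ε−(3 log 2)/(2l log p)}; in particular there exists η > 0 with the count ≪ (N²)^{1−η}. -/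
/-!
Every exceptional form has `A π ≥ B := (l+1)(l+2)`, so by Chebyshev's inequality the number of
them is at most the `2k`-th moment bound divided by `B ^ (2k)`, which leaves the saving `4⁻ᵏ`.
For `k = ⌊x⌋`, `x = 3 log N / (4 l log p)`, one has `p ^ (2lk) ≤ p ^ (2lx) = N ^ (3/2)`, so the
term `N ^ (1/2) p ^ (2kl)` is dominated by `N ^ 2` and the factor `(N p ^ (2lk)) ^ (ε/4)` by `N ^ ε`;
and `4 ^ (k+1) ≥ 4 ^ x = N ^ (3 log 2 / (2 l log p))` turns `4⁻ᵏ` into the power saving.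
-/

open Finset

theorem Finset.card_le_of_sum_pow_le {ι : Type*} (F : Finset ι) (A : ι → ℝ) {B M : ℝ} (n : ℕ)
    (hB : 0 < B) (hA : ∀ i ∈ F, B ≤ A i) (hsum : ∑ i ∈ F, A i ^ n ≤ M * B ^ n) :
    (#F : ℝ) ≤ M := by
  have hcard : (#F : ℝ) * B ^ n ≤ ∑ i ∈ F, A i ^ n := by
    simpa [nsmul_eq_mul] using F.card_nsmul_le_sum (fun i ↦ A i ^ n) (B ^ n)
      fun i hi ↦ pow_le_pow_left₀ hB.le (hA i hi) n
  exact le_of_mul_le_mul_right (hcard.trans hsum) (pow_pos hB n)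

namespace Real

theorem pow_floor_le_rpow {b x : ℝ} (hb : 1 ≤ b) (hx : 0 ≤ x) : b ^ ⌊x⌋₊ ≤ b ^ x := by
  rw [← rpow_natCast]
  exact rpow_le_rpow_of_exponent_le hb (Nat.floor_le hx)

theorem rpow_le_pow_floor_add_one {b : ℝ} (hb : 1 ≤ b) (x : ℝ) : b ^ x ≤ b ^ (⌊x⌋₊ + 1) := by
  rw [← rpow_natCast]
  push_cast
  exact rpow_le_rpow_of_exponent_le hb (Nat.lt_floor_add_one x).le

theorem pow_two_mul_floor_le_rpow_three_halves {N b : ℝ} {l : ℕ} (hN : 1 ≤ N) (hb : 1 < b)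
    (hl : 0 < l) : b ^ (2 * l * ⌊3 * log N / (4 * l * log b)⌋₊) ≤ N ^ (3 / 2 : ℝ) := by
  have hlogb := log_pos hb
  rw [pow_mul]
  refine (pow_floor_le_rpow (one_le_pow₀ hb.le) (by positivity [log_nonneg hN])).trans_eq ?_
  rw [rpow_def_of_pos (by positivity), rpow_def_of_pos (by positivity), log_pow]
  push_cast
  field_simp
  ring_nf

theorem rpow_le_four_pow_floor_add_one {N b : ℝ} {l : ℕ} (hN : 0 < N) (hb : 1 < b) :
    N ^ (3 * log 2 / (2 * l * log b)) ≤ 4 ^ (⌊3 * log N / (4 * l * log b)⌋₊ + 1) := by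
  have hlogb := log_pos hb
  refine le_of_eq_of_le ?_ (rpow_le_pow_floor_add_one (by norm_num) _)
  rw [rpow_def_of_pos hN, rpow_def_of_pos (by norm_num), show (4 : ℝ) = 2 ^ 2 by norm_num,
    log_pow]
  push_cast
  field_simp

theorem mul_rpow_le_rpow_of_le_rpow_three_halves {N P ε : ℝ} (hN : 1 ≤ N) (hP : 0 ≤ P)
    (hε : 0 ≤ ε) (hPN : P ≤ N ^ (3 / 2 : ℝ)) : (N * P) ^ (ε / 4) ≤ N ^ ε := by
  have hN0 : 0 < N := by linarith
  calc (N * P) ^ (ε / 4) ≤ (N * N ^ (3 / 2 : ℝ)) ^ (ε / 4) := by gcongr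
    _ = N ^ (5 / 8 * ε) := by
        rw [← rpow_one_add' hN0.le (by norm_num), ← rpow_mul hN0.le]
        norm_num
        ring_nf
    _ ≤ N ^ ε := rpow_le_rpow_of_exponent_le hN (by linarith)

theorem sqrt_add_rpow_mul_le_of_le_rpow_three_halves {N P : ℝ} (hN : 0 ≤ N) (hP : 0 ≤ P)
    (hPN : P ≤ N ^ (3 / 2 : ℝ)) : (N ^ 2 + N ^ (1 / 2 : ℝ) * P) ^ (1 / 2 : ℝ) ≤ √2 * N := by
  have hsmall : N ^ (1 / 2 : ℝ) * P ≤ N ^ 2 :=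
    calc N ^ (1 / 2 : ℝ) * P ≤ N ^ (1 / 2 : ℝ) * N ^ (3 / 2 : ℝ) := by gcongr
      _ = N ^ 2 := by rw [← rpow_add' hN (by norm_num)]; norm_num
  calc (N ^ 2 + N ^ (1 / 2 : ℝ) * P) ^ (1 / 2 : ℝ) ≤ (2 * N ^ 2) ^ (1 / 2 : ℝ) := by
        gcongr
        linarith
    _ = √2 * N := by rw [← sqrt_eq_rpow, sqrt_mul zero_le_two, sqrt_sq hN]

theorem inv_four_pow_le_of_rpow_le {N c : ℝ} (k : ℕ) (hN : 0 < N) (hNc : N ^ c ≤ 4 ^ (k + 1)) :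
    (1 / 4 : ℝ) ^ k ≤ 4 * N ^ (-c) := by
  rw [rpow_neg hN.le, one_div, inv_pow, ← div_eq_mul_inv,
    le_div_iff₀ (rpow_pos_of_pos hN c), inv_mul_le_iff₀ (by positivity), ← pow_succ]
  exact hNc

theorem moment_bound_le_of_exponent_bounds {N P C ε c : ℝ} (k : ℕ) (hN : 1 ≤ N) (hP : 0 ≤ P)
    (hC : 0 ≤ C) (hε : 0 ≤ ε) (hPN : P ≤ N ^ (3 / 2 : ℝ)) (hNc : N ^ c ≤ 4 ^ (k + 1)) :
    C * (N * P) ^ (ε / 4) * (1 / 4) ^ k * (N ^ 2 + N ^ (1 / 2 : ℝ) * P) ^ (1 / 2 : ℝ) * N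
      ≤ 4 * √2 * C * N ^ (2 + ε - c) := by
  have hN0 : 0 < N := by linarith
  have hsplit : N ^ (2 + ε - c) = N ^ ε * N ^ (-c) * N ^ 2 := by
    rw [← rpow_natCast, ← rpow_add hN0, ← rpow_add hN0]
    ring_nf
  calc C * (N * P) ^ (ε / 4) * (1 / 4) ^ k * (N ^ 2 + N ^ (1 / 2 : ℝ) * P) ^ (1 / 2 : ℝ) * N
      ≤ C * N ^ ε * (4 * N ^ (-c)) * (√2 * N) * N := by
        gcongr
        · exact mul_rpow_le_rpow_of_le_rpow_three_halves hN hP hε hPN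
        · exact inv_four_pow_le_of_rpow_le k hN0 hNc
        · exact sqrt_add_rpow_mul_le_of_le_rpow_three_halves hN0.le hP hPN
    _ = 4 * √2 * C * N ^ (2 + ε - c) := by rw [hsplit]; ring

end Real

theorem stmt_17_general (ε Cε : ℝ) (hε : 0 < ε) (hCε : 0 < Cε) (p l : ℕ) :
    ∃ C : ℝ, 0 < C ∧ ∀ (N : ℕ), 2 ≤ N →
      1 ≤ ⌊(3 * Real.log N) / (4 * l * Real.log p)⌋₊ →
      ∀ (ι : Type) (F : Finset ι) (A : ι → ℝ),
      (∀ π ∈ F, (((l : ℝ) + 1) * ((l : ℝ) + 2)) ≤ A π) →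
      (∀ k : ℕ, 1 ≤ k →
        ∑ π ∈ F, (A π) ^ (2 * k) ≤
          Cε * ((N : ℝ) * (p : ℝ) ^ (2 * l * k)) ^ (ε / 4) *
            ((((l : ℝ) + 1) * ((l : ℝ) + 2) / 2) ^ (2 * k)) *
            ((N : ℝ) ^ 2 + (N : ℝ) ^ ((1 : ℝ) / 2) * (p : ℝ) ^ (2 * k * l)) ^ ((1 : ℝ) / 2) *
            (N : ℝ)) →
      (F.card : ℝ) ≤ C * (N : ℝ) ^ (2 + ε - (3 * Real.log 2) / (2 * l * Real.log p)) := by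
  refine ⟨4 * √2 * Cε, by positivity, fun N hN hk ι F A hA hmom ↦ ?_⟩
  set x := 3 * Real.log N / (4 * l * Real.log p)
  have hN1 : (1 : ℝ) < N := by exact_mod_cast hN
  -- `k ≥ 1` forces the denominator `4 l log p` to be positive, so `p ≥ 2` and `l ≥ 1`.
  have hlp : 0 < (l : ℝ) * Real.log p := by
    have hx : 0 < x := one_pos.trans_le (Nat.floor_pos.mp hk)
    rw [div_pos_iff_of_pos_left (by positivity [Real.log_pos hN1])] at hx
    linarith
  have hlogp : 0 < Real.log p := pos_of_mul_pos_right hlp l.cast_nonneg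
  have hl : 0 < l := by exact_mod_cast pos_of_mul_pos_left hlp hlogp.le
  have hp : 1 < (p : ℝ) := (Real.log_pos_iff p.cast_nonneg).mp hlogp
  have hpow := Real.pow_two_mul_floor_le_rpow_three_halves hN1.le hp hl
  have hfour := Real.rpow_le_four_pow_floor_add_one (l := l) (zero_lt_one.trans hN1) hp
  refine (F.card_le_of_sum_pow_le A (2 * ⌊x⌋₊) (by positivity) hA ((hmom _ hk).trans_eq ?_)).trans
    (Real.moment_bound_le_of_exponent_bounds _ hN1.le (by positivity) hCε.le hε.le hpow hfour)
  have hhalf (B : ℝ) : (B / 2) ^ (2 * ⌊x⌋₊) = (1 / 4) ^ ⌊x⌋₊ * B ^ (2 * ⌊x⌋₊) := by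
    rw [pow_mul, pow_mul, div_pow]
    ring
  rw [mul_right_comm 2 ⌊x⌋₊ l, hhalf]
  ring

/-- density of forms violating the Ramanujan conjecture at p —
from the Chebyshev-type lower bound λ_π(p^l) ≥ (l+1)(l+2) on the exceptional
forms and the spectral moment bound, the count of exceptional forms is
≪ N^{2+ε−(3 log 2)/(2 l log p)} (optimizing at k = ⌊3 log N/(4 l log p)⌋ ≥ 1). -/
theorem stmt_17 (ε Cε : ℝ) (hε : 0 < ε) (hCε : 0 < Cε) (p l : ℕ)
    (hp : p.Prime) (hl : 1 ≤ l) :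
    ∃ C : ℝ, 0 < C ∧ ∀ (N : ℕ), 2 ≤ N →
      1 ≤ ⌊(3 * Real.log N) / (4 * l * Real.log p)⌋₊ →
      ∀ (ι : Type) (F : Finset ι) (A : ι → ℝ),
      (∀ π ∈ F, (((l : ℝ) + 1) * ((l : ℝ) + 2)) ≤ A π) →
      (∀ k : ℕ, 1 ≤ k →
        ∑ π ∈ F, (A π) ^ (2 * k) ≤
          Cε * ((N : ℝ) * (p : ℝ) ^ (2 * l * k)) ^ (ε / 4) *
            ((((l : ℝ) + 1) * ((l : ℝ) + 2) / 2) ^ (2 * k)) *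
            ((N : ℝ) ^ 2 + (N : ℝ) ^ ((1 : ℝ) / 2) * (p : ℝ) ^ (2 * k * l)) ^ ((1 : ℝ) / 2) *
            (N : ℝ)) →
      (F.card : ℝ) ≤ C * (N : ℝ) ^ (2 + ε - (3 * Real.log 2) / (2 * l * Real.log p)) :=
  stmt_17_general ε Cε hε hCε p l
end
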